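/- arXiv:2303.07271 — 8 statements merged into one kernel-verified Lean document; each statement's English description precedes it below -/
import Mathlib

section
/- Let g be proper, closed, and M-weakly convex, and let 0 < γ < 1/M. Then the proximal map prox_{γg} is Lipschitz with constant 1/(1 − γM), i.e., ‖prox_{γg}(x) − prox_{γg}(y)‖ ≤ (1/(1−γM))‖x−y‖ for all x, y. -/
open scoped RealInnerProductSpace

set_option maxHeartbeats 1600000 in
/-- For M-weakly convex `g` and `0 < γ < 1/M`, the proximal map
(any map `p` selecting minimizers of the proximal objective) is Lipschitz with constant
`1/(1 - γM)`. -/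
theorem stmt_3 {n : ℕ} (g : EuclideanSpace ℝ (Fin n) → ℝ) (M γ : ℝ) (hM : 0 < M)
    (hlsc : LowerSemicontinuous g)
    (hwc : ConvexOn ℝ Set.univ (fun x => g x + (M / 2) * ‖x‖ ^ 2))
    (hγ0 : 0 < γ) (hγ : γ < 1 / M)
    (p : EuclideanSpace ℝ (Fin n) → EuclideanSpace ℝ (Fin n))
    (hp : ∀ x v, g (p x) + (1 / (2 * γ)) * ‖p x - x‖ ^ 2 ≤
      g v + (1 / (2 * γ)) * ‖v - x‖ ^ 2) :
    ∀ x y, ‖p x - p y‖ ≤ (1 / (1 - γ * M)) * ‖x - y‖ := by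
  have hγM : γ * M < 1 := (lt_div_iff₀ hM).mp hγ
  have hM' : 0 < 1 - γ * M := by linarith
  obtain ⟨m, hm_def⟩ : ∃ m : ℝ, m = 1 / γ - M := ⟨_, rfl⟩
  have hm : 0 < m := by
    have : M * γ < 1 := by linarith [hγM]
    have h2 : M < 1 / γ := (lt_div_iff₀ hγ0).mpr this
    rw [hm_def]; linarith
  have hγm : γ * m = 1 - γ * M := by
    rw [hm_def]; field_simp
  -- growth lemma: strong convexity lower bound at the minimizer
  have growth : ∀ (z w : EuclideanSpace ℝ (Fin n)),
      g (p z) + (1 / (2 * γ)) * ‖p z - z‖ ^ 2 + (m / 2) * ‖w - p z‖ ^ 2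
        ≤ g w + (1 / (2 * γ)) * ‖w - z‖ ^ 2 := by
    intro z w
    set uz := p z with huz
    -- convexity of the shifted objective
    have aff : ConvexOn ℝ Set.univ
        (fun a : EuclideanSpace ℝ (Fin n) =>
          (1 / (2 * γ)) * ‖z‖ ^ 2 - (1 / γ) * ⟪a, z⟫) := by
      refine ⟨convex_univ, ?_⟩
      intro a _ b _ s t hs ht hst
      apply le_of_eq
      simp only [inner_add_left, real_inner_smul_left, smul_eq_mul]
      linear_combination (-(1 / (2 * γ)) * ‖z‖ ^ 2) * hst
    have qconv : ConvexOn ℝ Set.univ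
        (fun a => g a + (1 / (2 * γ)) * ‖a - z‖ ^ 2 - (m / 2) * ‖a‖ ^ 2) := by
      have heq : (fun a : EuclideanSpace ℝ (Fin n) =>
            g a + (1 / (2 * γ)) * ‖a - z‖ ^ 2 - (m / 2) * ‖a‖ ^ 2)
          = fun a => (g a + (M / 2) * ‖a‖ ^ 2)
              + ((1 / (2 * γ)) * ‖z‖ ^ 2 - (1 / γ) * ⟪a, z⟫) := by
        funext a
        have hns := norm_sub_sq_real a z
        rw [hm_def, hns]
        field_simp
        ring
      rw [heq]
      exact hwc.add aff
    have key : ∀ t : ℝ, t ∈ Set.Ioc (0:ℝ) 1 →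
        (m / 2) * (1 - t) * ‖w - uz‖ ^ 2 ≤
          (g w + (1 / (2 * γ)) * ‖w - z‖ ^ 2)
            - (g uz + (1 / (2 * γ)) * ‖uz - z‖ ^ 2) := by
      intro t ht
      obtain ⟨ht0, ht1⟩ := ht
      have h1t : (0:ℝ) ≤ 1 - t := by linarith
      have hcomb := qconv.2 (Set.mem_univ uz) (Set.mem_univ w) h1t (le_of_lt ht0)
        (by ring)
      have hnorm : ‖(1 - t) • uz + t • w‖ ^ 2
          = (1 - t) * ‖uz‖ ^ 2 + t * ‖w‖ ^ 2 - t * (1 - t) * ‖w - uz‖ ^ 2 := by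
        have e1 := norm_add_sq_real ((1 - t) • uz) (t • w)
        have e2 := norm_sub_sq_real w uz
        have e3 := real_inner_comm w uz
        rw [real_inner_smul_left, real_inner_smul_right, norm_smul, norm_smul,
          Real.norm_eq_abs, Real.norm_eq_abs, abs_of_nonneg h1t,
          abs_of_nonneg (le_of_lt ht0)] at e1
        linear_combination e1 + t * (1 - t) * e2 + 2 * t * (1 - t) * e3
      have hmin := hp z ((1 - t) • uz + t • w)
      rw [← huz] at hmin
      simp only [smul_eq_mul] at hcomb
      have hnorm' : (m / 2) * ‖(1 - t) • uz + t • w‖ ^ 2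
          = (m / 2) * ((1 - t) * ‖uz‖ ^ 2 + t * ‖w‖ ^ 2
              - t * (1 - t) * ‖w - uz‖ ^ 2) := by rw [hnorm]
      have h4 : t * ((m / 2) * (1 - t) * ‖w - uz‖ ^ 2) ≤
          t * ((g w + (1 / (2 * γ)) * ‖w - z‖ ^ 2)
            - (g uz + (1 / (2 * γ)) * ‖uz - z‖ ^ 2)) := by
        linarith [hcomb, hmin, hnorm']
      exact le_of_mul_le_mul_left h4 ht0
    have hlim : Filter.Tendsto (fun t : ℝ => (m / 2) * (1 - t) * ‖w - uz‖ ^ 2)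
        (nhdsWithin 0 (Set.Ioi 0)) (nhds ((m / 2) * (1 - 0) * ‖w - uz‖ ^ 2)) := by
      have hc : Continuous fun t : ℝ => (m / 2) * (1 - t) * ‖w - uz‖ ^ 2 := by
        fun_prop
      exact (hc.tendsto 0).mono_left nhdsWithin_le_nhds
    have hev : ∀ᶠ t in nhdsWithin (0:ℝ) (Set.Ioi 0),
        (m / 2) * (1 - t) * ‖w - uz‖ ^ 2 ≤
          (g w + (1 / (2 * γ)) * ‖w - z‖ ^ 2)
            - (g uz + (1 / (2 * γ)) * ‖uz - z‖ ^ 2) := by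
      filter_upwards [Ioc_mem_nhdsGT_of_mem (Set.mem_Ico.mpr ⟨le_refl (0:ℝ), one_pos⟩)]
        with t ht using key t ht
    have := le_of_tendsto hlim hev
    linarith
  intro x y
  have g1 := growth x (p y)
  have g2 := growth y (p x)
  have hvu : ‖(p y) - (p x)‖ = ‖(p x) - (p y)‖ := norm_sub_rev (p y) (p x)
  -- expand norms
  have e1 := norm_sub_sq_real (p x) x
  have e2 := norm_sub_sq_real (p y) x
  have e3 := norm_sub_sq_real (p x) y
  have e4 := norm_sub_sq_real (p y) y
  have hmono : m * ‖(p x) - (p y)‖ ^ 2 ≤ (1 / γ) * ⟪(p x) - (p y), x - y⟫ := by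
    have hsum : (m / 2) * ‖(p y) - (p x)‖ ^ 2 + (m / 2) * ‖(p x) - (p y)‖ ^ 2 ≤
        (1 / (2 * γ)) * (‖(p y) - x‖ ^ 2 + ‖(p x) - y‖ ^ 2 - ‖(p x) - x‖ ^ 2 - ‖(p y) - y‖ ^ 2) := by
      nlinarith [g1, g2]
    rw [hvu] at hsum
    have hinner : ⟪(p x) - (p y), x - y⟫ = ⟪(p x), x⟫ - ⟪(p x), y⟫ - ⟪(p y), x⟫ + ⟪(p y), y⟫ := by
      simp [inner_sub_left, inner_sub_right]; ring
    have hγ0' : γ ≠ 0 := ne_of_gt hγ0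
    rw [hinner]
    have : (1 / (2 * γ)) * (‖(p y) - x‖ ^ 2 + ‖(p x) - y‖ ^ 2 - ‖(p x) - x‖ ^ 2 - ‖(p y) - y‖ ^ 2)
        = (1 / γ) * (⟪(p x), x⟫ - ⟪(p x), y⟫ - ⟪(p y), x⟫ + ⟪(p y), y⟫) := by
      rw [e1, e2, e3, e4]
      field_simp
      ring
    linarith [hsum, this.symm.le]
  have hcs := real_inner_le_norm ((p x) - (p y)) (x - y)
  have hmain : m * ‖(p x) - (p y)‖ ^ 2 ≤ (1 / γ) * (‖(p x) - (p y)‖ * ‖x - y‖) := by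
    have h5 : (1 / γ) * ⟪(p x) - (p y), x - y⟫ ≤ (1 / γ) * (‖(p x) - (p y)‖ * ‖x - y‖) := by
      apply mul_le_mul_of_nonneg_left hcs
      positivity
    linarith
  obtain ⟨a, ha⟩ : ∃ a : ℝ, a = ‖(p x) - (p y)‖ := ⟨_, rfl⟩
  obtain ⟨b, hb⟩ : ∃ b : ℝ, b = ‖x - y‖ := ⟨_, rfl⟩
  rw [← ha, ← hb]
  rw [← ha, ← hb] at hmain
  have hmain_old := hmain
  have ha0 : 0 ≤ a := ha ▸ norm_nonneg _
  have hb0 : 0 ≤ b := hb ▸ norm_nonneg _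
  clear ha hb hmain_old g1 g2 e1 e2 e3 e4 hvu hmono hcs hp hwc hlsc growth hγ hm_def
  rcases eq_or_lt_of_le ha0 with h0 | h0
  · rw [← h0]
    positivity
  · have hd : (1 / (1 - γ * M)) * b = b / (1 - γ * M) := by ring
    rw [hd, le_div_iff₀ hM']
    have h6 : γ * (m * a ^ 2) ≤ γ * ((1 / γ) * (a * b)) :=
      mul_le_mul_of_nonneg_left hmain (le_of_lt hγ0)
    have h7 : (1 - γ * M) * a ^ 2 ≤ a * b := by
      rw [← hγm]
      have hq : γ * ((1 / γ) * (a * b)) = a * b := by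
        field_simp
      nlinarith [h6]
    nlinarith [h7, h0]
end

section
/- Let f: ℝⁿ → ℝ be C¹ with L_f-Lipschitz gradient and g proper closed M-weakly convex. Define T_γ(x) = prox_{γg}(x − γ∇f(x)), R_γ(x) = (x − T_γ(x))/γ, and the forward-backward envelope φ_γ(x) = min_u { f(x) + ⟨∇f(x), u−x⟩ + g(u) + (1/(2γ))‖u−x‖² }. Then for all x and γ > 0 with γ < 1/M: φ_γ(x) ≤ φ(x) − ((γ − Mγ²)/2)‖R_γ(x)‖², where φ = f + g. -/
set_option maxHeartbeats 1000000

open scoped RealInnerProductSpace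

lemma quad_interp {n : ℕ} (a b z : EuclideanSpace ℝ (Fin n)) (t : ℝ) :
    ‖((1-t) • a + t • b) - z‖^2
      = (1-t)*‖a-z‖^2 + t*‖b-z‖^2 - t*(1-t)*‖a-b‖^2 := by
  have h : ((1-t) • a + t • b) - z = (1-t) • (a-z) + t • (b-z) := by
    module
  have hnab : ‖a - b‖^2 = ‖a-z‖^2 - 2*⟪a-z, b-z⟫ + ‖b-z‖^2 := by
    have hab : a - b = (a-z) - (b-z) := by module
    rw [hab, norm_sub_sq_real]
  rw [h, norm_add_sq_real, hnab, norm_smul, norm_smul,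
    real_inner_smul_left, real_inner_smul_right, mul_pow, mul_pow,
    Real.norm_eq_abs, Real.norm_eq_abs, sq_abs, sq_abs]
  ring

/-- With `φ = f + g`, `T_γ(x) = prox_{γg}(x - γ∇f(x))`,
`R_γ(x) = γ⁻¹(x - T_γ(x))`, and the forward-backward envelope
`φ_γ(x) = f(x) + g(T_γ x) - γ⟪∇f x, R_γ x⟫ + (γ/2)‖R_γ x‖²`, one has
`φ_γ(x) ≤ φ(x) - ((γ - Mγ²)/2)‖R_γ(x)‖²` for `0 < γ < 1/M`. -/
theorem stmt_4 {n : ℕ} (f g : EuclideanSpace ℝ (Fin n) → ℝ)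
    (f' : EuclideanSpace ℝ (Fin n) → EuclideanSpace ℝ (Fin n))
    (Lf M γ : ℝ) (hM : 0 < M)
    (hf : ∀ x, HasGradientAt f (f' x) x)
    (hLf : ∀ x y, ‖f' x - f' y‖ ≤ Lf * ‖x - y‖)
    (hlsc : LowerSemicontinuous g)
    (hwc : ConvexOn ℝ Set.univ (fun x => g x + (M / 2) * ‖x‖ ^ 2))
    (hγ0 : 0 < γ) (hγ : γ < 1 / M)
    (T : EuclideanSpace ℝ (Fin n) → EuclideanSpace ℝ (Fin n))
    (hT : ∀ x v, g (T x) + (1 / (2 * γ)) * ‖T x - (x - γ • f' x)‖ ^ 2 ≤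
      g v + (1 / (2 * γ)) * ‖v - (x - γ • f' x)‖ ^ 2)
    (x : EuclideanSpace ℝ (Fin n)) :
    f x + g (T x) - γ * ⟪f' x, γ⁻¹ • (x - T x)⟫ + (γ / 2) * ‖γ⁻¹ • (x - T x)‖ ^ 2 ≤
      (f x + g x) - ((γ - M * γ ^ 2) / 2) * ‖γ⁻¹ • (x - T x)‖ ^ 2 := by
  set z := x - γ • f' x with hz
  set μ := γ⁻¹ - M with hμdef
  have hμ : 0 < μ := by
    have : M < γ⁻¹ := by
      rw [← one_div, lt_div_iff₀ hγ0]
      calc M * γ < M * (1/M) := by exact mul_lt_mul_of_pos_left hγ hM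
        _ = 1 := by field_simp
    simpa [hμdef] using sub_pos.mpr this
  -- Key strong-convexity inequality
  have key : g (T x) + (1 / (2*γ)) * ‖T x - z‖^2 + (μ/2) * ‖x - T x‖^2
      ≤ g x + (1 / (2*γ)) * ‖x - z‖^2 := by
    rw [← sub_nonneg]
    by_contra hcon
    push_neg at hcon
    set ε := -(g x + (1 / (2*γ)) * ‖x - z‖^2
      - (g (T x) + (1 / (2*γ)) * ‖T x - z‖^2 + (μ/2) * ‖x - T x‖^2)) with hε
    have hεpos : 0 < ε := by rw [hε]; linarith
    set C := ((1/(2*γ)) - M/2) * ‖x - T x‖^2 with hC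
    have hμeq : (1/(2*γ)) - M/2 = μ/2 := by
      rw [hμdef]; field_simp
    have hC0 : 0 ≤ C := by
      rw [hC, hμeq]; positivity
    set t := ε / (C + ε) with ht
    have ht0 : 0 < t := by positivity
    have ht1 : t ≤ 1 := by
      rw [ht, div_le_one (by positivity)]; linarith
    have htC : t * C < ε := by
      rw [ht, div_mul_eq_mul_div, div_lt_iff₀ (by positivity)]
      nlinarith [mul_pos hεpos hεpos]
    set c := (1-t) • (T x) + t • x with hc
    -- convexity of g + (M/2)‖·‖²
    have hconv := hwc.2 (Set.mem_univ (T x)) (Set.mem_univ x)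
      (by linarith : (0:ℝ) ≤ 1 - t) (le_of_lt ht0) (by ring)
    simp only [smul_eq_mul] at hconv
    have hq0 : ‖c‖^2 = (1-t)*‖T x‖^2 + t*‖x‖^2 - t*(1-t)*‖T x - x‖^2 := by
      have := quad_interp (T x) x 0 t
      simpa [hc] using this
    have hgc : g c ≤ (1-t) * g (T x) + t * g x + (M/2)*t*(1-t)*‖T x - x‖^2 := by
      have h1 : g c + (M/2)*‖c‖^2 ≤ (1-t)*(g (T x) + (M/2)*‖T x‖^2)
          + t*(g x + (M/2)*‖x‖^2) := hconv
      nlinarith [hq0]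
    have hqz : ‖c - z‖^2 = (1-t)*‖T x - z‖^2 + t*‖x - z‖^2 - t*(1-t)*‖T x - x‖^2 :=
      quad_interp (T x) x z t
    have hTc := hT x c
    rw [← hz] at hTc
    have hγinv : 0 < 1/(2*γ) := by positivity
    have hmain : t * (g (T x) + (1/(2*γ))*‖T x - z‖^2)
        ≤ t * (g x + (1/(2*γ))*‖x - z‖^2) - t*(1-t)*((1/(2*γ)) - M/2)*‖T x - x‖^2 := by
      have expand : g (T x) + (1/(2*γ))*‖T x - z‖^2
          ≤ (1-t) * g (T x) + t * g x + (M/2)*t*(1-t)*‖T x - x‖^2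
            + (1/(2*γ)) * ((1-t)*‖T x - z‖^2 + t*‖x - z‖^2 - t*(1-t)*‖T x - x‖^2) := by
        calc g (T x) + (1/(2*γ))*‖T x - z‖^2 ≤ g c + (1/(2*γ))*‖c - z‖^2 := hTc
          _ = g c + (1/(2*γ)) * ((1-t)*‖T x - z‖^2 + t*‖x - z‖^2 - t*(1-t)*‖T x - x‖^2) := by
              rw [hqz]
          _ ≤ _ := by linarith [hgc]
      nlinarith [expand]
    have hdiv : g (T x) + (1/(2*γ))*‖T x - z‖^2
        ≤ g x + (1/(2*γ))*‖x - z‖^2 - (1-t)*((1/(2*γ)) - M/2)*‖T x - x‖^2 := by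
      have h3 : t * (g x + (1/(2*γ))*‖x - z‖^2 - (1-t)*((1/(2*γ)) - M/2)*‖T x - x‖^2)
          = t * (g x + (1/(2*γ))*‖x - z‖^2) - t*(1-t)*((1/(2*γ)) - M/2)*‖T x - x‖^2 := by ring
      exact le_of_mul_le_mul_left (by linarith [hmain, h3.ge]) ht0
    have hnorm : ‖T x - x‖ = ‖x - T x‖ := norm_sub_rev _ _
    rw [hnorm] at hdiv
    have h4 : (1-t)*((1/(2*γ)) - M/2)*‖x - T x‖^2 = C - t*C := by rw [hC]; ring
    have h5 : (μ/2) * ‖x - T x‖^2 = C := by rw [hC, hμeq]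
    clear_value c t C ε
    linarith
  -- Now the algebra to reach the goal
  have hTz : ‖T x - z‖^2 = γ^2*‖f' x‖^2 - 2*γ*⟪f' x, x - T x⟫ + ‖x - T x‖^2 := by
    have h1 : T x - z = γ • f' x - (x - T x) := by rw [hz]; module
    rw [h1, norm_sub_sq_real, norm_smul, real_inner_smul_left, mul_pow,
      Real.norm_eq_abs, sq_abs]
    ring
  have hxz : ‖x - z‖^2 = γ^2*‖f' x‖^2 := by
    have h1 : x - z = γ • f' x := by rw [hz]; module
    rw [h1, norm_smul, mul_pow, Real.norm_eq_abs, sq_abs]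
  have hsmul_inner : ⟪f' x, γ⁻¹ • (x - T x)⟫ = γ⁻¹ * ⟪f' x, x - T x⟫ :=
    real_inner_smul_right _ _ _
  have hsmul_norm : ‖γ⁻¹ • (x - T x)‖^2 = γ⁻¹^2 * ‖x - T x‖^2 := by
    rw [norm_smul, mul_pow, Real.norm_eq_abs, sq_abs]
  rw [hsmul_inner, hsmul_norm]
  rw [hTz, hxz] at key
  have hγne : γ ≠ 0 := ne_of_gt hγ0
  have e1 : γ * (γ⁻¹ * ⟪f' x, x - T x⟫) = ⟪f' x, x - T x⟫ := by
    field_simp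
  have e2 : (γ/2) * (γ⁻¹^2 * ‖x - T x‖^2) = (1/(2*γ)) * ‖x - T x‖^2 := by
    field_simp
  have e3 : ((γ - M*γ^2)/2) * (γ⁻¹^2 * ‖x - T x‖^2) = (μ/2) * ‖x - T x‖^2 := by
    have h5 : (γ - M*γ^2)/2 * γ⁻¹^2 = μ/2 := by
      rw [hμdef]; field_simp
    calc ((γ - M*γ^2)/2) * (γ⁻¹^2 * ‖x - T x‖^2)
        = ((γ - M*γ^2)/2 * γ⁻¹^2) * ‖x - T x‖^2 := by ring
      _ = (μ/2) * ‖x - T x‖^2 := by rw [h5]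
  rw [e1, e2, e3]
  have e4 : (1/(2*γ)) * (γ^2*‖f' x‖^2 - 2*γ*⟪f' x, x - T x⟫ + ‖x - T x‖^2)
      = (γ/2)*‖f' x‖^2 - ⟪f' x, x - T x⟫ + (1/(2*γ))*‖x - T x‖^2 := by
    field_simp
  have e5 : (1/(2*γ)) * (γ^2*‖f' x‖^2) = (γ/2)*‖f' x‖^2 := by field_simp
  rw [e4, e5] at key
  linarith
end

section
/- Let f: ℝⁿ → ℝ be C¹ with L_f-Lipschitz gradient and g proper closed (possibly nonconvex). With T_γ, R_γ, φ_γ as in the forward-backward envelope construction, for all x and γ > 0: φ(T_γ(x)) ≤ φ_γ(x) − (γ/2)(1 − γL_f)‖R_γ(x)‖². In particular φ(T_γ(x)) ≤ φ_γ(x) whenever γ ∈ (0, 1/L_f]. -/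
open scoped RealInnerProductSpace

/-- Descent lemma for functions with Lipschitz gradient. -/
lemma descent_lemma {n : ℕ} (f : EuclideanSpace ℝ (Fin n) → ℝ)
    (f' : EuclideanSpace ℝ (Fin n) → EuclideanSpace ℝ (Fin n)) (Lf : ℝ)
    (hf : ∀ x, HasGradientAt f (f' x) x)
    (hLf : ∀ x y, ‖f' x - f' y‖ ≤ Lf * ‖x - y‖)
    (x y : EuclideanSpace ℝ (Fin n)) :
    f y ≤ f x + ⟪f' x, y - x⟫ + Lf / 2 * ‖y - x‖ ^ 2 := by
  set v := y - x with hv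
  set φ : ℝ → ℝ := fun t => f (x + t • v) - t * ⟪f' x, v⟫ - Lf * t ^ 2 / 2 * ‖v‖ ^ 2 with hφ
  have hderiv : ∀ t : ℝ, HasDerivAt φ
      (⟪f' (x + t • v), v⟫ - ⟪f' x, v⟫ - Lf * t * ‖v‖ ^ 2) t := by
    intro t
    have hc : HasDerivAt (fun t : ℝ => x + t • v) v t := by
      simpa using (hasDerivAt_id t).smul_const v |>.const_add x
    have hfd : HasFDerivAt f (InnerProductSpace.toDual ℝ _ (f' (x + t • v))) (x + t • v) :=
      (hf (x + t • v))
    have h1 : HasDerivAt (fun t : ℝ => f (x + t • v)) ⟪f' (x + t • v), v⟫ t := by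
      have := hfd.comp_hasDerivAt t hc
      simp only [Function.comp_def, InnerProductSpace.toDual_apply_apply] at this
      exact this
    have h2 : HasDerivAt (fun t : ℝ => t * ⟪f' x, v⟫) ⟪f' x, v⟫ t := by
      simpa using (hasDerivAt_id t).mul_const (⟪f' x, v⟫)
    have h3 : HasDerivAt (fun t : ℝ => Lf * t ^ 2 / 2 * ‖v‖ ^ 2) (Lf * t * ‖v‖ ^ 2) t := by
      have : HasDerivAt (fun t : ℝ => t ^ 2) (2 * t) t := by
        simpa using hasDerivAt_pow 2 t
      have := ((this.const_mul Lf).div_const 2).mul_const (‖v‖ ^ 2)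
      rw [show Lf * t * ‖v‖ ^ 2 = Lf * (2 * t) / 2 * ‖v‖ ^ 2 by ring]
      exact this
    have := (h1.sub h2).sub h3
    exact this
  have key : φ 1 ≤ φ 0 := by
    have hAnti : AntitoneOn φ (Set.Icc 0 1) := by
      apply antitoneOn_of_deriv_nonpos (convex_Icc 0 1)
      · exact fun t _ => (hderiv t).differentiableAt.continuousAt.continuousWithinAt
      · intro t ht
        exact (hderiv t).differentiableAt.differentiableWithinAt
      · intro t ht
        rw [interior_Icc] at ht
        rw [(hderiv t).deriv]
        have hcs : ⟪f' (x + t • v) - f' x, v⟫ ≤ ‖f' (x + t • v) - f' x‖ * ‖v‖ :=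
          real_inner_le_norm _ _
        have hlip : ‖f' (x + t • v) - f' x‖ ≤ Lf * (t * ‖v‖) := by
          have := hLf (x + t • v) x
          simpa [norm_smul, abs_of_pos ht.1, mul_assoc] using this
        have hv0 : (0:ℝ) ≤ ‖v‖ := norm_nonneg _
        nlinarith [inner_sub_left (𝕜 := ℝ) (f' (x + t • v)) (f' x) v]
    exact hAnti (by norm_num) (by norm_num) (by norm_num)
  have h0 : φ 0 = f x := by simp [hφ]
  have h1 : φ 1 = f y - ⟪f' x, v⟫ - Lf / 2 * ‖v‖ ^ 2 := by
    have hx : x + (1:ℝ) • v = y := by rw [hv]; simp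
    simp only [hφ, hx, one_pow, one_mul]; ring
  rw [h0, h1] at key
  linarith

/-- With `φ = f + g`, `T_γ`, `R_γ`, `φ_γ` as in the forward-backward envelope
construction, `φ(T_γ x) ≤ φ_γ(x) - (γ/2)(1 - γL_f)‖R_γ x‖²` for every `x` and every `γ > 0`;
in particular `φ(T_γ x) ≤ φ_γ(x)` when `γ L_f ≤ 1` (i.e. `γ ∈ (0, 1/L_f]`). -/
theorem stmt_5 {n : ℕ} (f g : EuclideanSpace ℝ (Fin n) → ℝ)
    (f' : EuclideanSpace ℝ (Fin n) → EuclideanSpace ℝ (Fin n))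
    (Lf γ : ℝ)
    (hf : ∀ x, HasGradientAt f (f' x) x)
    (hLf : ∀ x y, ‖f' x - f' y‖ ≤ Lf * ‖x - y‖)
    (hlsc : LowerSemicontinuous g)
    (hγ0 : 0 < γ)
    (T : EuclideanSpace ℝ (Fin n) → EuclideanSpace ℝ (Fin n))
    (hT : ∀ x v, g (T x) + (1 / (2 * γ)) * ‖T x - (x - γ • f' x)‖ ^ 2 ≤
      g v + (1 / (2 * γ)) * ‖v - (x - γ • f' x)‖ ^ 2) :
    ∀ x : EuclideanSpace ℝ (Fin n),
      (f (T x) + g (T x) ≤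
        (f x + g (T x) - γ * ⟪f' x, γ⁻¹ • (x - T x)⟫ + (γ / 2) * ‖γ⁻¹ • (x - T x)‖ ^ 2) -
          (γ / 2) * (1 - γ * Lf) * ‖γ⁻¹ • (x - T x)‖ ^ 2) ∧
      (γ * Lf ≤ 1 → f (T x) + g (T x) ≤
        f x + g (T x) - γ * ⟪f' x, γ⁻¹ • (x - T x)⟫ + (γ / 2) * ‖γ⁻¹ • (x - T x)‖ ^ 2) := by
  intro x
  have hdesc := descent_lemma f f' Lf hf hLf x (T x)
  have hinner : ⟪f' x, γ⁻¹ • (x - T x)⟫ = γ⁻¹ * ⟪f' x, x - T x⟫ :=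
    real_inner_smul_right _ _ _
  have hinner2 : ⟪f' x, T x - x⟫ = - ⟪f' x, x - T x⟫ := by
    rw [show T x - x = -(x - T x) by abel, inner_neg_right]
  have hnorm : ‖γ⁻¹ • (x - T x)‖ ^ 2 = γ⁻¹ ^ 2 * ‖x - T x‖ ^ 2 := by
    rw [norm_smul, Real.norm_eq_abs, abs_of_pos (inv_pos.mpr hγ0), mul_pow]
  have hnorm2 : ‖T x - x‖ ^ 2 = ‖x - T x‖ ^ 2 := by
    rw [show T x - x = -(x - T x) by abel, norm_neg]
  rw [hinner2, hnorm2] at hdesc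
  have hnn : (0:ℝ) ≤ ‖γ⁻¹ • (x - T x)‖ ^ 2 := by positivity
  have main : f (T x) + g (T x) ≤
      (f x + g (T x) - γ * ⟪f' x, γ⁻¹ • (x - T x)⟫ + (γ / 2) * ‖γ⁻¹ • (x - T x)‖ ^ 2) -
        (γ / 2) * (1 - γ * Lf) * ‖γ⁻¹ • (x - T x)‖ ^ 2 := by
    rw [hinner, hnorm]
    have hγne : γ ≠ 0 := ne_of_gt hγ0
    have e1 : γ * (γ⁻¹ * ⟪f' x, x - T x⟫) = ⟪f' x, x - T x⟫ := by
      field_simp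
    rw [e1]
    have e2 : γ / 2 * (γ⁻¹ ^ 2 * ‖x - T x‖ ^ 2) -
        γ / 2 * (1 - γ * Lf) * (γ⁻¹ ^ 2 * ‖x - T x‖ ^ 2) = Lf / 2 * ‖x - T x‖ ^ 2 := by
      field_simp
      ring
    linarith [e2]
  refine ⟨main, fun hγL => ?_⟩
  have hc : 0 ≤ (γ / 2) * (1 - γ * Lf) * ‖γ⁻¹ • (x - T x)‖ ^ 2 :=
    mul_nonneg (mul_nonneg (le_of_lt (half_pos hγ0)) (sub_nonneg.mpr hγL)) hnn
  linarith
end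

section
/- Consider the MINFBE iteration with M-weakly convex g, step sizes γ_k ≡ γ ∈ (0, 1/M), descent points w^k satisfying φ_γ(w^k) ≤ φ_γ(x^k), the line-search condition φ(T_γ(w^k)) ≤ φ_γ(w^k) − (βγ/2)‖R_γ(w^k)‖², and updates x^{k+1} = T_γ(w^k). Then φ(x^{k+1}) ≤ φ(x^k) − (βγ/2)‖R_γ(w^k)‖² − ((γ − Mγ²)/2)‖R_γ(x^k)‖² for all k; in particular (φ(x^k)) is nonincreasing. -/
open scoped RealInnerProductSpace

/-- The forward-backward envelope, written in closed form via a prox-selection `T`. -/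
noncomputable def fbEnv9 {n : ℕ} (f g : EuclideanSpace ℝ (Fin n) → ℝ)
    (f' T : EuclideanSpace ℝ (Fin n) → EuclideanSpace ℝ (Fin n)) (γ : ℝ)
    (x : EuclideanSpace ℝ (Fin n)) : ℝ :=
  f x + g (T x) - γ * ⟪f' x, γ⁻¹ • (x - T x)⟫ + (γ / 2) * ‖γ⁻¹ • (x - T x)‖ ^ 2

private lemma combo_norm_sq9 {n : ℕ} (u v : EuclideanSpace ℝ (Fin n)) (a b : ℝ) (hab : a + b = 1) :
    ‖a • u + b • v‖ ^ 2 = a * ‖u‖ ^ 2 + b * ‖v‖ ^ 2 - a * b * ‖u - v‖ ^ 2 := by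
  have hb : b = 1 - a := by linarith
  subst hb
  have h1 : ∀ w : EuclideanSpace ℝ (Fin n), ‖w‖ ^ 2 = ⟪w, w⟫ :=
    fun w => (real_inner_self_eq_norm_sq w).symm
  simp only [h1, inner_add_add_self, inner_sub_sub_self, real_inner_smul_left,
    real_inner_smul_right, real_inner_comm u v]
  ring

private lemma expand_add_sq9 {n : ℕ} (a b : EuclideanSpace ℝ (Fin n)) :
    ‖a + b‖ ^ 2 = ‖a‖ ^ 2 + 2 * ⟪a, b⟫ + ‖b‖ ^ 2 := by
  have h1 : ∀ w : EuclideanSpace ℝ (Fin n), ‖w‖ ^ 2 = ⟪w, w⟫ :=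
    fun w => (real_inner_self_eq_norm_sq w).symm
  simp only [h1, inner_add_add_self]
  linarith [real_inner_comm a b]

/-- Strong minimality inequality for the prox of an `M`-weakly convex function. -/
private lemma prox_strong9 {n : ℕ} (g : EuclideanSpace ℝ (Fin n) → ℝ) (M γ : ℝ)
    (hγ0 : 0 < γ) (hμ : M < 1 / γ)
    (hwc : ConvexOn ℝ Set.univ (fun x => g x + (M / 2) * ‖x‖ ^ 2))
    (u z : EuclideanSpace ℝ (Fin n))
    (hu : ∀ v, g u + (1 / (2 * γ)) * ‖u - z‖ ^ 2 ≤ g v + (1 / (2 * γ)) * ‖v - z‖ ^ 2)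
    (v : EuclideanSpace ℝ (Fin n)) :
    g u + (1 / (2 * γ)) * ‖u - z‖ ^ 2 + ((1 / γ - M) / 2) * ‖v - u‖ ^ 2 ≤
      g v + (1 / (2 * γ)) * ‖v - z‖ ^ 2 := by
  have hγne : γ ≠ 0 := ne_of_gt hγ0
  set F : EuclideanSpace ℝ (Fin n) → ℝ := fun w => g w + (1 / (2 * γ)) * ‖w - z‖ ^ 2 with hF
  set μ : ℝ := 1 / γ - M with hμdef
  have hμ0 : 0 < μ := by simp only [hμdef]; linarith
  set d : ℝ := ‖v - u‖ ^ 2 with hd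
  have hd0 : 0 ≤ d := sq_nonneg _
  have hA0 : 0 ≤ F v - F u := by have := hu v; simp only [hF]; linarith
  -- key convex-combination inequality
  have key : ∀ a : ℝ, 0 < a → a < 1 → μ / 2 * (1 - a) * d ≤ F v - F u := by
    intro a ha0 ha1
    set b : ℝ := 1 - a with hbdef
    have hb0 : 0 ≤ b := by simp only [hbdef]; linarith
    have hab : b + a = 1 := by simp only [hbdef]; ring
    set p : EuclideanSpace ℝ (Fin n) := b • u + a • v with hp
    have hcvx : g p + M / 2 * ‖p‖ ^ 2 ≤
        b * (g u + M / 2 * ‖u‖ ^ 2) + a * (g v + M / 2 * ‖v‖ ^ 2) := by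
      have := hwc.2 (Set.mem_univ u) (Set.mem_univ v) hb0 (le_of_lt ha0) hab
      simpa [smul_eq_mul] using this
    have e1 : ‖p‖ ^ 2 = b * ‖u‖ ^ 2 + a * ‖v‖ ^ 2 - b * a * ‖u - v‖ ^ 2 :=
      combo_norm_sq9 u v b a hab
    have e2 : ‖p - z‖ ^ 2 = b * ‖u - z‖ ^ 2 + a * ‖v - z‖ ^ 2 - b * a * ‖u - v‖ ^ 2 := by
      have hpz : p - z = b • (u - z) + a • (v - z) := by
        calc p - z = b • u + a • v - (b + a) • z := by rw [hab, one_smul]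
          _ = b • (u - z) + a • (v - z) := by
              rw [add_smul]; simp only [smul_sub]; abel
      rw [hpz, combo_norm_sq9 (u - z) (v - z) b a hab,
        show u - z - (v - z) = u - v from by abel]
    have huv : ‖u - v‖ ^ 2 = d := by rw [hd, norm_sub_rev]
    have hFp : F p ≤ b * F u + a * F v - μ / 2 * b * a * d := by
      simp only [hF]
      calc g p + (1 / (2 * γ)) * ‖p - z‖ ^ 2
          ≤ (b * (g u + M / 2 * ‖u‖ ^ 2) + a * (g v + M / 2 * ‖v‖ ^ 2)
              - (M / 2) * ‖p‖ ^ 2) + (1 / (2 * γ)) * ‖p - z‖ ^ 2 := by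
            linarith [hcvx]
        _ = b * (g u + (1 / (2 * γ)) * ‖u - z‖ ^ 2) + a * (g v + (1 / (2 * γ)) * ‖v - z‖ ^ 2)
              - μ / 2 * b * a * d := by
            rw [e1, e2, ← huv, hμdef]
            field_simp
            ring
    have hup : F u ≤ F p := hu p
    simp only [hbdef] at hFp
    clear_value p b F μ d
    subst hbdef
    have h2 : a * (μ / 2 * (1 - a) * d) ≤ a * (F v - F u) := by nlinarith [hFp, hup]
    exact le_of_mul_le_mul_left h2 ha0
  by_contra hcon
  push_neg at hcon
  have hcon' : F v - F u < μ / 2 * d := by simp only [hF]; linarith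
  have hdpos : 0 < d := by
    rcases lt_or_eq_of_le hd0 with h | h
    · exact h
    · exfalso; rw [← h] at hcon'; simp at hcon'; linarith
  set δ : ℝ := μ / 2 * d with hδdef
  have hδ0 : 0 < δ := by positivity
  set A : ℝ := F v - F u with hAdef
  set a : ℝ := (δ - A) / (2 * δ) with hadef
  have ha0 : 0 < a := div_pos (by linarith) (by linarith)
  have ha1 : a < 1 := by
    rw [hadef, div_lt_one (by linarith)]; linarith
  have hkey := key a ha0 ha1
  have ha2 : a * (2 * δ) = δ - A := by
    rw [hadef]; field_simp
  nlinarith [hkey, hδ0, ha2]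

/-- The FBE is below `φ` minus the slack term. -/
private lemma fbEnv_le9 {n : ℕ} (f g : EuclideanSpace ℝ (Fin n) → ℝ)
    (f' T : EuclideanSpace ℝ (Fin n) → EuclideanSpace ℝ (Fin n)) (M γ : ℝ)
    (hγ0 : 0 < γ) (hμ : M < 1 / γ)
    (hwc : ConvexOn ℝ Set.univ (fun x => g x + (M / 2) * ‖x‖ ^ 2))
    (hT : ∀ x v, g (T x) + (1 / (2 * γ)) * ‖T x - (x - γ • f' x)‖ ^ 2 ≤
      g v + (1 / (2 * γ)) * ‖v - (x - γ • f' x)‖ ^ 2)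
    (x : EuclideanSpace ℝ (Fin n)) :
    fbEnv9 f g f' T γ x ≤
      f x + g x - ((γ - M * γ ^ 2) / 2) * ‖γ⁻¹ • (x - T x)‖ ^ 2 := by
  have hγne : γ ≠ 0 := ne_of_gt hγ0
  set u := T x with hu
  set z := x - γ • f' x with hz
  have hps := prox_strong9 g M γ hγ0 hμ hwc u z (fun v => hT x v) x
  set S : ℝ := ‖x - u‖ ^ 2 with hS
  set P : ℝ := ⟪f' x, x - u⟫ with hP
  set Q : ℝ := ‖f' x‖ ^ 2 with hQ
  have exz : ‖x - z‖ ^ 2 = γ ^ 2 * Q := by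
    rw [hz]
    simp only [sub_sub_cancel, norm_smul]
    rw [Real.norm_eq_abs, abs_of_pos hγ0, hQ]; ring
  have euz : ‖u - z‖ ^ 2 = S - 2 * γ * P + γ ^ 2 * Q := by
    have h1 : u - z = (u - x) + γ • f' x := by rw [hz]; abel
    rw [h1, expand_add_sq9]
    have h2 : ⟪u - x, γ • f' x⟫ = -(γ * P) := by
      rw [real_inner_smul_right, real_inner_comm,
        show u - x = -(x - u) from by abel, inner_neg_right, hP]
      ring
    have h3 : ‖u - x‖ ^ 2 = S := by rw [hS, norm_sub_rev]
    have h4 : ‖γ • f' x‖ ^ 2 = γ ^ 2 * Q := by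
      rw [norm_smul, Real.norm_eq_abs, abs_of_pos hγ0, hQ]; ring
    rw [h2, h3, h4]; ring
  have hsm : ‖γ⁻¹ • (x - u)‖ ^ 2 = γ⁻¹ ^ 2 * S := by
    rw [norm_smul, Real.norm_eq_abs, abs_of_pos (inv_pos.2 hγ0), hS]; ring
  have hinner : ⟪f' x, γ⁻¹ • (x - u)⟫ = γ⁻¹ * P := by
    rw [real_inner_smul_right, hP]
  rw [exz, euz] at hps
  have h5 : (1 / (2 * γ)) * (S - 2 * γ * P + γ ^ 2 * Q) =
      (1 / (2 * γ)) * S - P + (γ / 2) * Q := by field_simp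
  have h6 : (1 / (2 * γ)) * (γ ^ 2 * Q) = (γ / 2) * Q := by field_simp
  have key : g u + (1 / (2 * γ)) * S - P ≤ g x - ((1 / γ - M) / 2) * S := by
    linarith [hps]
  have h7 : γ * (γ⁻¹ * P) = P := by field_simp
  have h8 : γ / 2 * (γ⁻¹ ^ 2 * S) = (1 / (2 * γ)) * S := by field_simp
  have h9 : (γ - M * γ ^ 2) / 2 * (γ⁻¹ ^ 2 * S) = ((1 / γ - M) / 2) * S := by
    field_simp
  simp only [fbEnv9, ← hu, hsm, hinner]
  linarith [key]

/-- Sufficient decrease of the MINFBE iteration: with the descent condition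
`φ_γ(w^k) ≤ φ_γ(x^k)`, the line-search condition, and updates `x^{k+1} = T_γ(w^k)`,
one has `φ(x^{k+1}) ≤ φ(x^k) - (βγ/2)‖R_γ(w^k)‖² - ((γ - Mγ²)/2)‖R_γ(x^k)‖²`, and
`(φ(x^k))` is nonincreasing. -/
theorem stmt_9 {n : ℕ} (f g : EuclideanSpace ℝ (Fin n) → ℝ)
    (f' : EuclideanSpace ℝ (Fin n) → EuclideanSpace ℝ (Fin n))
    (Lf M γ β : ℝ) (hM : 0 < M)
    (hf : ∀ x, HasGradientAt f (f' x) x)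
    (hLf : ∀ x y, ‖f' x - f' y‖ ≤ Lf * ‖x - y‖)
    (hlsc : LowerSemicontinuous g)
    (hwc : ConvexOn ℝ Set.univ (fun x => g x + (M / 2) * ‖x‖ ^ 2))
    (hβ0 : 0 ≤ β) (hβ1 : β < 1)
    (hγ0 : 0 < γ) (hγM : γ < 1 / M)
    (T : EuclideanSpace ℝ (Fin n) → EuclideanSpace ℝ (Fin n))
    (hT : ∀ x v, g (T x) + (1 / (2 * γ)) * ‖T x - (x - γ • f' x)‖ ^ 2 ≤
      g v + (1 / (2 * γ)) * ‖v - (x - γ • f' x)‖ ^ 2)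
    (x w : ℕ → EuclideanSpace ℝ (Fin n))
    (hdesc : ∀ k, fbEnv9 f g f' T γ (w k) ≤ fbEnv9 f g f' T γ (x k))
    (hls : ∀ k, f (T (w k)) + g (T (w k)) ≤
      fbEnv9 f g f' T γ (w k) - (β * γ / 2) * ‖γ⁻¹ • (w k - T (w k))‖ ^ 2)
    (hx : ∀ k, x (k + 1) = T (w k)) :
    (∀ k, f (x (k + 1)) + g (x (k + 1)) ≤
      (f (x k) + g (x k)) - (β * γ / 2) * ‖γ⁻¹ • (w k - T (w k))‖ ^ 2 -
        ((γ - M * γ ^ 2) / 2) * ‖γ⁻¹ • (x k - T (x k))‖ ^ 2) ∧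
      Antitone (fun k => f (x k) + g (x k)) := by
  have hμ : M < 1 / γ := by
    rw [lt_div_iff₀ hγ0]
    have := (lt_div_iff₀ hM).mp hγM
    linarith
  have main : ∀ k, f (x (k + 1)) + g (x (k + 1)) ≤
      (f (x k) + g (x k)) - (β * γ / 2) * ‖γ⁻¹ • (w k - T (w k))‖ ^ 2 -
        ((γ - M * γ ^ 2) / 2) * ‖γ⁻¹ • (x k - T (x k))‖ ^ 2 := by
    intro k
    rw [hx k]
    have h1 := hls k
    have h2 := hdesc k
    have h3 := fbEnv_le9 f g f' T M γ hγ0 hμ hwc hT (x k)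
    linarith
  refine ⟨main, antitone_nat_of_succ_le fun k => ?_⟩
  have h := main k
  have hb : 0 ≤ (β * γ / 2) * ‖γ⁻¹ • (w k - T (w k))‖ ^ 2 := by positivity
  have hc : 0 ≤ ((γ - M * γ ^ 2) / 2) * ‖γ⁻¹ • (x k - T (x k))‖ ^ 2 := by
    have : 0 ≤ γ - M * γ ^ 2 := by nlinarith [(lt_div_iff₀ hM).mp hγM]
    positivity
  show f (x (k + 1)) + g (x (k + 1)) ≤ f (x k) + g (x k)
  linarith
end

section
/- Let g_σ: ℝⁿ → ℝ be C¹ with L-Lipschitz gradient where L < 1, and define D_σ = I − ∇g_σ. Then D_σ is injective, and D_σ(x) = prox_{φ_σ}(x) where φ_σ(x) = g_σ(D_σ⁻¹(x)) − (1/2)‖D_σ⁻¹(x) − x‖² on Im(D_σ) and +∞ elsewhere. Moreover, φ_σ is L/(L+1)-weakly convex. -/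
open scoped RealInnerProductSpace
open Set

section Aux

variable {E : Type*} [NormedAddCommGroup E] [InnerProductSpace ℝ E] [CompleteSpace E]

private lemma taylorBound' (g : E → ℝ) (g' : E → E) (L : ℝ)
    (hg : ∀ x, HasGradientAt g (g' x) x)
    (hLip : ∀ x y, ‖g' x - g' y‖ ≤ L * ‖x - y‖) (x y : E) :
    |g x - g y - ⟪g' y, x - y⟫| ≤ L / 2 * ‖x - y‖ ^ 2 := by
  set d := x - y with hd
  have key : ∀ t : ℝ, HasDerivAt (fun t : ℝ => g (y + t • d) - g y - t * ⟪g' y, d⟫)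
      (⟪g' (y + t • d) - g' y, d⟫) t := by
    intro t
    have hline : HasDerivAt (fun t : ℝ => y + t • d) d t := by
      simpa using ((hasDerivAt_id t).smul_const d).const_add y
    have h1 : HasDerivAt (fun t : ℝ => g (y + t • d)) ⟪g' (y + t • d), d⟫ t := by
      have := ((hg (y + t • d)).hasFDerivAt.comp_hasDerivAt t hline)
      simp at this
      exact this
    have h2 : HasDerivAt (fun t : ℝ => g y + t * ⟪g' y, d⟫) ⟪g' y, d⟫ t := by
      simpa [mul_comm] using ((hasDerivAt_id t).const_mul ⟪g' y, d⟫).const_add (g y)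
    have := h1.sub h2
    simp only [inner_sub_left]
    convert this using 1
    · rfl
    · ext s; ring
    · ext s; simp only [Pi.sub_apply]; ring
  have bound := image_norm_le_of_norm_deriv_right_le_deriv_boundary
    (f := fun t : ℝ => g (y + t • d) - g y - t * ⟪g' y, d⟫)
    (f' := fun t : ℝ => ⟪g' (y + t • d) - g' y, d⟫)
    (a := 0) (b := 1)
    (fun t _ => (key t).continuousAt.continuousWithinAt)
    (fun t _ => (key t).hasDerivWithinAt)
    (B := fun t => L / 2 * ‖d‖ ^ 2 * t ^ 2) (B' := fun t => L * ‖d‖ ^ 2 * t)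
    (by simp)
    (fun t => by
      have : HasDerivAt (fun t : ℝ => L / 2 * ‖d‖ ^ 2 * t ^ 2) (L / 2 * ‖d‖ ^ 2 * (2 * t)) t := by
        simpa using (hasDerivAt_pow 2 t).const_mul (L / 2 * ‖d‖ ^ 2)
      convert this using 1; ring)
    (fun t ht => by
      have h1 : ‖⟪g' (y + t • d) - g' y, d⟫‖ ≤ ‖g' (y + t • d) - g' y‖ * ‖d‖ := by
        rw [Real.norm_eq_abs]; exact abs_real_inner_le_norm _ _
      have h2 : ‖g' (y + t • d) - g' y‖ ≤ L * (t * ‖d‖) := by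
        have := hLip (y + t • d) y
        simpa [norm_smul, abs_of_nonneg ht.1] using this
      calc ‖⟪g' (y + t • d) - g' y, d⟫‖ ≤ L * (t * ‖d‖) * ‖d‖ := by
            refine h1.trans (mul_le_mul_of_nonneg_right h2 (norm_nonneg d))
        _ = L * ‖d‖ ^ 2 * t := by ring)
  have := bound (x := 1) ⟨zero_le_one, le_refl 1⟩
  have hx : y + (1 : ℝ) • d = x := by simp [hd]
  rw [hx] at this
  simpa [Real.norm_eq_abs] using this

private lemma interpBound' (g : E → ℝ) (g' : E → E) (L : ℝ) (hL : 0 < L)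
    (hg : ∀ x, HasGradientAt g (g' x) x)
    (hLip : ∀ x y, ‖g' x - g' y‖ ≤ L * ‖x - y‖) (x y : E) :
    1 / (4 * L) * ‖(g' x - g' y) + L • (x - y)‖ ^ 2 - L / 2 * ‖x - y‖ ^ 2 ≤
      g x - g y - ⟪g' y, x - y⟫ := by
  set d := x - y with hdd
  set e := g' x - g' y with hee
  set u := e + L • d with huu
  set c : ℝ := (2 * L)⁻¹ with hcc
  set w := x - c • u with hww
  have hwx : w - x = -(c • u) := by rw [hww]; abel
  have hwy : w - y = d - c • u := by rw [hww, hdd]; abel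
  have h1 := (abs_le.mp (taylorBound' g g' L hg hLip w y)).1
  have h2 := (abs_le.mp (taylorBound' g g' L hg hLip w x)).2
  have hip1 : ⟪g' y, w - y⟫ = ⟪g' y, d⟫ - c * ⟪g' y, u⟫ := by
    rw [hwy, inner_sub_right, real_inner_smul_right]
  have hip2 : ⟪g' x, w - x⟫ = -(c * ⟪g' x, u⟫) := by
    rw [hwx, inner_neg_right, real_inner_smul_right]
  have hn1 : ‖w - y‖ ^ 2 = ‖d‖ ^ 2 - 2 * (c * ⟪d, u⟫) + c ^ 2 * ‖u‖ ^ 2 := by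
    rw [hwy, norm_sub_sq_real, real_inner_smul_right, norm_smul]
    simp [mul_pow, Real.norm_eq_abs, sq_abs]
  have hn2 : ‖w - x‖ ^ 2 = c ^ 2 * ‖u‖ ^ 2 := by
    rw [hwx, norm_neg, norm_smul, mul_pow, Real.norm_eq_abs, sq_abs]
  have hbb : ⟪g' x, u⟫ - ⟪g' y, u⟫ = ‖u‖ ^ 2 - L * ⟪d, u⟫ := by
    have h3 : ⟪e, u⟫ = ‖u‖ ^ 2 - L * ⟪d, u⟫ := by
      have : e = u - L • d := by rw [huu]; abel
      rw [this, inner_sub_left, real_inner_self_eq_norm_sq, real_inner_smul_left]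
    rw [← h3, hee, inner_sub_left]
  rw [hip1, hn1] at h1
  rw [hip2, hn2] at h2
  have hc1 : 2 * L * c = 1 := by rw [hcc]; field_simp
  have key : g x - g y - ⟪g' y, d⟫ ≥
      c * (‖u‖ ^ 2 - L * ⟪d, u⟫) - L / 2 * (c ^ 2 * ‖u‖ ^ 2)
        - L / 2 * (‖d‖ ^ 2 - 2 * (c * ⟪d, u⟫) + c ^ 2 * ‖u‖ ^ 2) := by
    nlinarith [h1, h2, hbb]
  have hrw : c * (‖u‖ ^ 2 - L * ⟪d, u⟫) - L / 2 * (c ^ 2 * ‖u‖ ^ 2)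
        - L / 2 * (‖d‖ ^ 2 - 2 * (c * ⟪d, u⟫) + c ^ 2 * ‖u‖ ^ 2)
      = 1 / (4 * L) * ‖u‖ ^ 2 - L / 2 * ‖d‖ ^ 2 := by
    rw [hcc]; field_simp; ring
  linarith [key, hrw.symm.le]

private lemma weakIneq' (g : E → ℝ) (g' : E → E) (L : ℝ) (hL0 : 0 ≤ L) (hL1 : L < 1)
    (hg : ∀ x, HasGradientAt g (g' x) x)
    (hLip : ∀ x y, ‖g' x - g' y‖ ≤ L * ‖x - y‖) (x y : E) :
    1 / 2 * ‖g' x - g' y‖ ^ 2 - (L / (L + 1)) / 2 * ‖(x - y) - (g' x - g' y)‖ ^ 2 ≤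
      g x - g y - ⟪g' y, x - y⟫ := by
  rcases eq_or_lt_of_le hL0 with hL | hL
  · have he : g' x - g' y = 0 := by
      have := hLip x y
      rw [← hL] at this
      simpa using norm_le_zero_iff.mp (by linarith)
    have h1 := (abs_le.mp (taylorBound' g g' L hg hLip x y)).1
    rw [← hL] at h1 ⊢
    simp only [he, norm_zero]
    simpa using h1
  · have key := interpBound' g g' L hL hg hLip x y
    set d := x - y
    set e := g' x - g' y
    have hu : ‖e + L • d‖ ^ 2 = ‖e‖ ^ 2 + 2 * (L * ⟪e, d⟫) + L ^ 2 * ‖d‖ ^ 2 := by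
      rw [norm_add_sq_real, real_inner_smul_right, norm_smul, mul_pow, Real.norm_eq_abs, sq_abs]
    have hde : ‖d - e‖ ^ 2 = ‖d‖ ^ 2 - 2 * ⟪e, d⟫ + ‖e‖ ^ 2 := by
      rw [norm_sub_sq_real, real_inner_comm]
    rw [hu] at key
    rw [hde]
    have hfac : 1 / (4 * L) * (‖e‖ ^ 2 + 2 * (L * ⟪e, d⟫) + L ^ 2 * ‖d‖ ^ 2) - L / 2 * ‖d‖ ^ 2
        - (1 / 2 * ‖e‖ ^ 2 - (L / (L + 1)) / 2 * (‖d‖ ^ 2 - 2 * ⟪e, d⟫ + ‖e‖ ^ 2))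
        = (1 - L) / (4 * L * (L + 1)) * (‖e‖ ^ 2 + 2 * (L * ⟪e, d⟫) + L ^ 2 * ‖d‖ ^ 2) := by
      field_simp
      ring
    have hnn : 0 ≤ (1 - L) / (4 * L * (L + 1)) *
        (‖e‖ ^ 2 + 2 * (L * ⟪e, d⟫) + L ^ 2 * ‖d‖ ^ 2) := by
      rw [← hu]
      exact mul_nonneg (div_nonneg (by linarith) (by positivity)) (sq_nonneg _)
    linarith [key, hfac, hnn]

end Aux

/-- Gradient-step denoiser as proximal map. If `g_σ` is C¹ with `L`-Lipschitz
gradient, `L < 1`, and `D = I - ∇g_σ`, then `D` is injective, `D x` is the (unique) minimizer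
of `u ↦ φ_σ(u) + ½‖u - x‖²` over the effective domain `Im D` of
`φ_σ(u) = g_σ(D⁻¹ u) - ½‖D⁻¹ u - u‖²`, and `φ_σ` is `L/(L+1)`-weakly convex (on its domain). -/
theorem stmt_12 {n : ℕ} (gσ : EuclideanSpace ℝ (Fin n) → ℝ)
    (gσ' : EuclideanSpace ℝ (Fin n) → EuclideanSpace ℝ (Fin n))
    (L : ℝ) (hL0 : 0 ≤ L) (hL1 : L < 1)
    (hg : ∀ x, HasGradientAt gσ (gσ' x) x)
    (hLip : ∀ x y, ‖gσ' x - gσ' y‖ ≤ L * ‖x - y‖)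
    (D : EuclideanSpace ℝ (Fin n) → EuclideanSpace ℝ (Fin n))
    (hD : ∀ x, D x = x - gσ' x)
    (φσ : EuclideanSpace ℝ (Fin n) → ℝ)
    (hφ : ∀ x, φσ x = gσ (Function.invFun D x) - (1 / 2) * ‖Function.invFun D x - x‖ ^ 2) :
    Function.Injective D ∧
      (∀ x, ∀ u ∈ Set.range D,
        φσ (D x) + (1 / 2) * ‖D x - x‖ ^ 2 ≤ φσ u + (1 / 2) * ‖u - x‖ ^ 2) ∧
      (∀ x, ∀ u ∈ Set.range D,
        φσ u + (1 / 2) * ‖u - x‖ ^ 2 = φσ (D x) + (1 / 2) * ‖D x - x‖ ^ 2 → u = D x) ∧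
      ConvexOn ℝ (Set.range D) (fun x => φσ x + ((L / (L + 1)) / 2) * ‖x‖ ^ 2) := by
  have hinj : Function.Injective D := by
    intro x y h
    rw [hD, hD] at h
    have h2 : x - y = gσ' x - gσ' y := by
      rw [sub_eq_sub_iff_sub_eq_sub] at h
      exact h
    have hn := hLip x y
    rw [← h2] at hn
    have h0 : ‖x - y‖ = 0 := le_antisymm (by nlinarith [norm_nonneg (x - y)]) (norm_nonneg _)
    have := norm_eq_zero.mp h0
    rwa [sub_eq_zero] at this
  have hsurj : Function.Surjective D := by
    intro z
    have hK : LipschitzWith (Real.toNNReal L) (fun w => z + gσ' w) := by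
      refine LipschitzWith.of_dist_le_mul fun a b => ?_
      have := hLip a b
      simp only [dist_eq_norm, add_sub_add_left_eq_sub, Real.coe_toNNReal L hL0]
      simpa using this
    have hcon : ContractingWith (Real.toNNReal L) (fun w => z + gσ' w) := by
      refine ⟨?_, hK⟩
      have : (Real.toNNReal L : ℝ) < 1 := by rwa [Real.coe_toNNReal L hL0]
      exact_mod_cast this
    obtain ⟨w, hw, -⟩ := hcon.exists_fixedPoint 0 (edist_ne_top _ _)
    refine ⟨w, ?_⟩
    have hw' : z + gσ' w = w := hw
    rw [hD]
    nth_rewrite 1 [← hw']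
    abel
  have hleft : ∀ x, Function.invFun D (D x) = x := fun x =>
    Function.leftInverse_invFun hinj x
  have φat : ∀ x, φσ (D x) = gσ x - (1 / 2) * ‖gσ' x‖ ^ 2 := by
    intro x
    rw [hφ (D x), hleft x, hD x]
    simp [sub_sub_cancel]
  have keyid : ∀ x y, φσ (D y) + (1 / 2) * ‖D y - x‖ ^ 2
      = gσ y + (1 / 2) * ‖y - x‖ ^ 2 - ⟪gσ' y, y - x⟫ := by
    intro x y
    rw [φat y, hD y]
    have h1 : y - gσ' y - x = (y - x) - gσ' y := by abel
    rw [h1, norm_sub_sq_real, real_inner_comm]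
    ring
  have base : ∀ x, φσ (D x) + (1 / 2) * ‖D x - x‖ ^ 2 = gσ x := by
    intro x
    rw [keyid x x]
    simp
  refine ⟨hinj, ?_, ?_, ?_, ?_⟩
  · rintro x u ⟨y, rfl⟩
    rw [keyid x y, base x]
    have ht := (abs_le.mp (taylorBound' gσ gσ' L hg hLip x y)).2
    have hic : ⟪gσ' y, y - x⟫ = -⟪gσ' y, x - y⟫ := by
      have h3 : y - x = -(x - y) := by abel
      rw [h3, inner_neg_right]
    have hrev : ‖y - x‖ = ‖x - y‖ := norm_sub_rev y x
    rw [hic, hrev]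
    nlinarith [mul_nonneg (by linarith : (0:ℝ) ≤ 1 - L) (sq_nonneg ‖x - y‖)]
  · rintro x u ⟨y, rfl⟩ heq
    rw [keyid x y, base x] at heq
    have ht := (abs_le.mp (taylorBound' gσ gσ' L hg hLip x y)).2
    have hic : ⟪gσ' y, y - x⟫ = -⟪gσ' y, x - y⟫ := by
      have h3 : y - x = -(x - y) := by abel
      rw [h3, inner_neg_right]
    have hrev : ‖y - x‖ = ‖x - y‖ := norm_sub_rev y x
    rw [hic, hrev] at heq
    have h0 : ‖x - y‖ ^ 2 = 0 := by nlinarith [sq_nonneg ‖x - y‖]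
    have h1 : ‖x - y‖ = 0 := by
      have := sq_nonneg ‖x - y‖
      nlinarith [norm_nonneg (x - y)]
    have h2 : x = y := by
      have := norm_eq_zero.mp h1
      rwa [sub_eq_zero] at this
    rw [h2]
  · rw [hsurj.range_eq]
    exact convex_univ
  · rintro u ⟨p, rfl⟩ v ⟨q, rfl⟩ a b ha hb hab
    obtain ⟨m, hm⟩ := hsurj (a • D p + b • D q)
    set ρ := L / (L + 1) with hρ
    have minor : ∀ z, φσ (D m) + ρ / 2 * ‖D m‖ ^ 2 + (⟪gσ' m, D z⟫ - ⟪gσ' m, D m⟫)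
        + ρ * (⟪D m, D z⟫ - ⟪D m, D m⟫) ≤ φσ (D z) + ρ / 2 * ‖D z‖ ^ 2 := by
      intro z
      have W := weakIneq' gσ gσ' L hL0 hL1 hg hLip z m
      have hDe : D z - D m = (z - m) - (gσ' z - gσ' m) := by rw [hD, hD]; abel
      have hP : ‖(z - m) - (gσ' z - gσ' m)‖ ^ 2 = ‖D z - D m‖ ^ 2 := by rw [hDe]
      rw [hP] at W
      have hC : ‖gσ' z - gσ' m‖ ^ 2 = ‖gσ' z‖ ^ 2 - 2 * ⟪gσ' z, gσ' m⟫ + ‖gσ' m‖ ^ 2 :=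
        norm_sub_sq_real _ _
      have hB2a : ⟪gσ' m, gσ' z - gσ' m⟫ = ⟪gσ' z, gσ' m⟫ - ‖gσ' m‖ ^ 2 := by
        rw [inner_sub_right, real_inner_self_eq_norm_sq, real_inner_comm]
      have hB2 : ⟪gσ' m, D z⟫ - ⟪gσ' m, D m⟫
          = ⟪gσ' m, z - m⟫ - (⟪gσ' z, gσ' m⟫ - ‖gσ' m‖ ^ 2) := by
        rw [← inner_sub_right, hDe, inner_sub_right, hB2a]
      have e1 : ρ * ‖D z - D m‖ ^ 2
          = ρ * (‖D z‖ ^ 2 - 2 * ⟪D m, D z⟫ + ‖D m‖ ^ 2) := by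
        rw [norm_sub_sq_real, real_inner_comm (D z) (D m)]
      have e2 : ρ * (⟪D m, D z⟫ - ⟪D m, D m⟫)
          = ρ * (⟪D m, D z⟫ - ‖D m‖ ^ 2) := by
        rw [real_inner_self_eq_norm_sq]
      rw [φat z, φat m]
      rw [hC] at W
      linarith [W, hB2, e1, e2]
    have H1 := mul_le_mul_of_nonneg_left (minor p) ha
    have H2 := mul_le_mul_of_nonneg_left (minor q) hb
    have c1 : ∀ G : EuclideanSpace ℝ (Fin n), ⟪G, D m⟫ = a * ⟪G, D p⟫ + b * ⟪G, D q⟫ := by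
      intro G
      rw [hm, inner_add_right, real_inner_smul_right, real_inner_smul_right]
    have cρ : ρ * ⟪D m, D m⟫ = ρ * (a * ⟪D m, D p⟫ + b * ⟪D m, D q⟫) := by
      rw [c1 (D m)]
    have habX : ∀ X : ℝ, a * X + b * X = X := fun X => by rw [← add_mul, hab, one_mul]
    simp only [smul_eq_mul]
    rw [← hm]
    nlinarith [H1, H2, c1 (gσ' m), cρ, habX (φσ (D m)), habX (ρ * ‖D m‖ ^ 2),
      habX ⟪gσ' m, D m⟫, habX (ρ * ⟪D m, D m⟫)]
end

section
/- Let f be C² with L_f-Lipschitz gradient and g proper closed M-weakly convex with γ ∈ (0, 1/M). Then the forward-backward envelope φ_γ(x) = f(x) − (γ/2)‖∇f(x)‖² + g^γ(x − γ∇f(x)) is continuously differentiable with ∇φ_γ(x) = (I − γ∇²f(x)) R_γ(x), where g^γ is the Moreau envelope of g and R_γ(x) = γ^{-1}(x − prox_{γg}(x − γ∇f(x))). -/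
open scoped RealInnerProductSpace

section MoreauAux

variable {E : Type*} [NormedAddCommGroup E] [InnerProductSpace ℝ E]

private lemma aux_sq (a b : E) (t : ℝ) :
    ‖a + t • b‖ ^ 2 = ‖a‖ ^ 2 + 2 * t * ⟪a, b⟫ + t ^ 2 * ‖b‖ ^ 2 := by
  rw [← real_inner_self_eq_norm_sq, ← real_inner_self_eq_norm_sq, ← real_inner_self_eq_norm_sq,
    real_inner_add_add_self, real_inner_smul_right, real_inner_smul_left, real_inner_smul_right]
  ring

lemma key_ineq {g : E → ℝ} {M γ : ℝ} (hM : 0 < M) (hγ0 : 0 < γ)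
    (hwc : ConvexOn ℝ Set.univ (fun x => g x + (M / 2) * ‖x‖ ^ 2))
    {p : E → E}
    (hp : ∀ x v, g (p x) + (1 / (2 * γ)) * ‖p x - x‖ ^ 2 ≤
      g v + (1 / (2 * γ)) * ‖v - x‖ ^ 2) (x v : E) :
    g (p x) ≤ g v + ⟪p x - x, v - p x⟫ / γ + M / 2 * ‖v - p x‖ ^ 2 := by
  set u := p x with hu
  set B := ⟪u - x, v - u⟫ with hB
  set C := ‖v - u‖ ^ 2 with hC
  have hC0 : 0 ≤ C := sq_nonneg _
  have main : ∀ t : ℝ, 0 < t → t < 1 →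
      g u ≤ g v + B / γ + M / 2 * C + t * (C / (2 * γ)) := by
    intro t ht0 ht1
    have hcvx := hwc.2 (Set.mem_univ u) (Set.mem_univ v)
      (by linarith : (0:ℝ) ≤ 1 - t) ht0.le (by ring)
    have hw : (1 - t) • u + t • v = u + t • (v - u) := by module
    rw [hw] at hcvx
    have h1 := hp x (u + t • (v - u))
    have e1 : ‖u + t • (v - u)‖ ^ 2 = ‖u‖ ^ 2 + 2 * t * ⟪u, v - u⟫ + t ^ 2 * C :=
      aux_sq u (v - u) t
    have e2 : ‖(u + t • (v - u)) - x‖ ^ 2 = ‖u - x‖ ^ 2 + 2 * t * B + t ^ 2 * C := by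
      have h := aux_sq (u - x) (v - u) t
      rw [show (u + t • (v - u)) - x = (u - x) + t • (v - u) by abel, h]
    have e3 : ‖v‖ ^ 2 = ‖u‖ ^ 2 + 2 * ⟪u, v - u⟫ + C := by
      have h := aux_sq u (v - u) 1
      simpa using h
    rw [e2] at h1
    have hcvx' : g (u + t • (v - u)) + M/2 * ‖u + t • (v - u)‖^2
        ≤ (1-t) * (g u + M/2 * ‖u‖^2) + t * (g v + M/2 * ‖v‖^2) := by
      simpa using hcvx
    rw [e1, e3] at hcvx'
    have hγ' : 0 < 2 * γ := by linarith
    have h2 : t * g u ≤ t * (g v + B / γ + M / 2 * C + t * (C / (2 * γ))) := by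
      have hmt : M / 2 * ((1-t) * ‖u‖^2 + t * (‖u‖^2 + 2*⟪u, v-u⟫ + C)
          - (‖u‖^2 + 2*t*⟪u,v-u⟫ + t^2*C)) = M / 2 * (t * (1 - t) * C) := by ring
      have hginq : g u ≤ g (u + t • (v - u)) + (1/(2*γ)) * (2*t*B + t^2*C) := by
        have : (1/(2*γ)) * (‖u-x‖^2 + 2*t*B + t^2*C)
            = (1/(2*γ)) * ‖u-x‖^2 + (1/(2*γ)) * (2*t*B + t^2*C) := by ring
        rw [this] at h1; linarith
      have expand : (1/(2*γ)) * (2*t*B + t^2*C) = t * (B/γ) + t * (t * (C/(2*γ))) := by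
        field_simp
      nlinarith [hcvx', hginq, mul_nonneg (mul_nonneg hM.le (sq_nonneg t)) hC0]
    exact le_of_mul_le_mul_left (by linarith [h2]) ht0
  refine le_of_forall_pos_le_add fun ε hε => ?_
  rcases le_or_gt (C / (2 * γ)) 0 with hD | hD
  · have := main (1/2) (by norm_num) (by norm_num)
    linarith
  · set t := min (1/2) (ε / (C / (2*γ))) with ht
    have ht0 : 0 < t := lt_min (by norm_num) (div_pos hε hD)
    have ht1 : t < 1 := lt_of_le_of_lt (min_le_left _ _) (by norm_num)
    have h := main t ht0 ht1
    have : t * (C / (2*γ)) ≤ ε := by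
      have h2 : t ≤ ε / (C / (2*γ)) := min_le_right _ _
      calc t * (C / (2*γ)) ≤ (ε / (C / (2*γ))) * (C / (2*γ)) := by
            exact mul_le_mul_of_nonneg_right h2 hD.le
        _ = ε := div_mul_cancel₀ _ hD.ne'
    linarith

private lemma p_lip {g : E → ℝ} {M γ : ℝ} (hM : 0 < M) (hγ0 : 0 < γ) (hγ : γ < 1 / M)
    (hwc : ConvexOn ℝ Set.univ (fun x => g x + (M / 2) * ‖x‖ ^ 2))
    {p : E → E}
    (hp : ∀ x v, g (p x) + (1 / (2 * γ)) * ‖p x - x‖ ^ 2 ≤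
      g v + (1 / (2 * γ)) * ‖v - x‖ ^ 2) (x y : E) :
    ‖p y - p x‖ ≤ (1 - γ * M)⁻¹ * ‖y - x‖ := by
  have hσ : 0 < 1 - γ * M := by
    have := (lt_div_iff₀ hM).mp hγ; linarith
  have k1 := key_ineq hM hγ0 hwc hp x (p y)
  have k2 := key_ineq hM hγ0 hwc hp y (p x)
  set d := p y - p x with hd
  have hin1 : ⟪p x - x, p y - p x⟫ = ⟪p x - x, d⟫ := rfl
  have hin2 : ⟪p y - y, p x - p y⟫ = -⟪p y - y, d⟫ := by
    rw [hd, show p x - p y = -(p y - p x) from by abel, inner_neg_right]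
  have hnorm2 : ‖p x - p y‖ ^ 2 = ‖d‖ ^ 2 := by
    rw [hd, show p x - p y = -(p y - p x) from by abel, norm_neg]
  rw [hin1] at k1
  rw [hin2, hnorm2] at k2
  -- combine to get (1 - γM) ‖d‖² ≤ ⟪y - x, d⟫
  have hsum : (1 - γ * M) * ‖d‖ ^ 2 ≤ ⟪y - x, d⟫ := by
    have hexp : ⟪p x - x, d⟫ - ⟪p y - y, d⟫ = -‖d‖ ^ 2 + ⟪y - x, d⟫ := by
      rw [← inner_sub_left, ← real_inner_self_eq_norm_sq]
      rw [show p x - x - (p y - y) = (y - x) + -d by rw [hd]; abel, inner_add_left,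
        inner_neg_left, hd]
      ring
    have h1 : g (p x) + g (p y) ≤ g (p y) + g (p x)
        + (⟪p x - x, d⟫ - ⟪p y - y, d⟫) / γ + M * ‖d‖ ^ 2 := by
      have : ‖p y - p x‖ ^ 2 = ‖d‖ ^ 2 := rfl
      rw [this] at k1
      have hr : (⟪p x - x, d⟫ - ⟪p y - y, d⟫) / γ
          = ⟪p x - x, d⟫ / γ + (-⟪p y - y, d⟫) / γ := by ring
      rw [hr]
      linarith [k1, k2]
    rw [hexp] at h1
    have h2 : ‖d‖ ^ 2 / γ - ⟪y - x, d⟫ / γ ≤ M * ‖d‖ ^ 2 := by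
      have hr : (-‖d‖ ^ 2 + ⟪y - x, d⟫) / γ = -(‖d‖ ^ 2 / γ) + ⟪y - x, d⟫ / γ := by ring
      rw [hr] at h1; linarith
    have := mul_le_mul_of_nonneg_left h2 hγ0.le
    calc (1 - γ * M) * ‖d‖ ^ 2 = ‖d‖ ^ 2 - γ * (M * ‖d‖ ^ 2) := by ring
      _ ≤ ‖d‖ ^ 2 - γ * (‖d‖ ^ 2 / γ - ⟪y - x, d⟫ / γ) := by linarith
      _ = ⟪y - x, d⟫ := by field_simp; ring
  have hcs : ⟪y - x, d⟫ ≤ ‖y - x‖ * ‖d‖ := real_inner_le_norm _ _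
  rcases eq_or_lt_of_le (norm_nonneg d) with h0 | h0
  · rw [← h0]; positivity
  · have : (1 - γ * M) * ‖d‖ ≤ ‖y - x‖ := by
      have h3 : (1 - γ * M) * ‖d‖ * ‖d‖ ≤ ‖y - x‖ * ‖d‖ := by nlinarith
      exact le_of_mul_le_mul_right h3 h0
    rw [inv_mul_eq_div, le_div_iff₀ hσ] at *
    linarith [this]


-- upper bound on the envelope
lemma env_upper {g : E → ℝ} {γ : ℝ} (hγ0 : 0 < γ) {p : E → E}
    (hp : ∀ x v, g (p x) + (1 / (2 * γ)) * ‖p x - x‖ ^ 2 ≤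
      g v + (1 / (2 * γ)) * ‖v - x‖ ^ 2) (x y : E) :
    (g (p y) + (1 / (2 * γ)) * ‖p y - y‖ ^ 2)
      ≤ (g (p x) + (1 / (2 * γ)) * ‖p x - x‖ ^ 2)
        + ⟪γ⁻¹ • (x - p x), y - x⟫ + (1 / (2 * γ)) * ‖y - x‖ ^ 2 := by
  have h := hp y (p x)
  have e : ‖p x - y‖ ^ 2 = ‖p x - x‖ ^ 2 + 2 * (-1) * ⟪p x - x, y - x⟫ + 1 ^ 2 * ‖y - x‖ ^ 2 := by
    have := aux_sq (p x - x) (y - x) (-1)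
    rw [show p x - x + (-1 : ℝ) • (y - x) = p x - y from by module] at this
    rw [this]; ring
  have hi : ⟪γ⁻¹ • (x - p x), y - x⟫ = γ⁻¹ * (-⟪p x - x, y - x⟫) := by
    rw [real_inner_smul_left, show x - p x = -(p x - x) from by abel, inner_neg_left]
  rw [e] at h
  rw [hi]
  have hexp : (1 / (2*γ)) * (‖p x - x‖ ^ 2 + 2 * (-1) * ⟪p x - x, y - x⟫ + 1 ^ 2 * ‖y - x‖ ^ 2)
      = (1 / (2*γ)) * ‖p x - x‖ ^ 2 + γ⁻¹ * (-⟪p x - x, y - x⟫) + (1/(2*γ)) * ‖y - x‖ ^ 2 := by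
    field_simp
  rw [hexp] at h
  linarith

lemma env_grad [CompleteSpace E] {g : E → ℝ} {M γ : ℝ} (hM : 0 < M) (hγ0 : 0 < γ) (hγ : γ < 1 / M)
    (hwc : ConvexOn ℝ Set.univ (fun x => g x + (M / 2) * ‖x‖ ^ 2))
    {p : E → E}
    (hp : ∀ x v, g (p x) + (1 / (2 * γ)) * ‖p x - x‖ ^ 2 ≤
      g v + (1 / (2 * γ)) * ‖v - x‖ ^ 2) (x : E) :
    HasGradientAt (fun y => g (p y) + (1 / (2 * γ)) * ‖p y - y‖ ^ 2)
      (γ⁻¹ • (x - p x)) x := by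
  set env := fun y => g (p y) + (1 / (2 * γ)) * ‖p y - y‖ ^ 2 with henv
  set v := fun y => γ⁻¹ • (y - p y) with hv
  set K : ℝ := (1 - γ * M)⁻¹ with hK
  have hσ : 0 < 1 - γ * M := by
    have := (lt_div_iff₀ hM).mp hγ; linarith
  have hK0 : 0 ≤ K := by positivity
  set C : ℝ := 1 / (2 * γ) + γ⁻¹ * (1 + K) with hCdef
  have hC0 : 0 < C := by positivity
  -- Lipschitz bound for v
  have hvlip : ∀ y z : E, ‖v y - v z‖ ≤ γ⁻¹ * (1 + K) * ‖y - z‖ := by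
    intro y z
    have : v y - v z = γ⁻¹ • ((y - z) - (p y - p z)) := by rw [hv]; module
    rw [this, norm_smul]
    have h1 : ‖(y - z) - (p y - p z)‖ ≤ ‖y - z‖ + ‖p y - p z‖ := norm_sub_le _ _
    have h2 : ‖p y - p z‖ ≤ K * ‖y - z‖ := p_lip hM hγ0 hγ hwc hp z y
    have h3 : ‖(γ:ℝ)⁻¹‖ = γ⁻¹ := by rw [Real.norm_eq_abs, abs_of_pos (by positivity)]
    rw [h3]
    nlinarith [norm_nonneg (y - z), inv_pos.mpr hγ0]
  -- two-sided quadratic bound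
  have hquad : ∀ y : E, |env y - env x - ⟪v x, y - x⟫| ≤ C * ‖y - x‖ ^ 2 := by
    intro y
    have hup := env_upper hγ0 hp x y
    have hdown := env_upper hγ0 hp y x
    have hvx' : ⟪γ⁻¹ • (x - p x), y - x⟫ = ⟪v x, y - x⟫ := rfl
    have hvy' : ⟪γ⁻¹ • (y - p y), x - y⟫ = ⟪v y, x - y⟫ := rfl
    rw [hvx'] at hup
    rw [hvy'] at hdown
    have hCexp : C * ‖y - x‖ ^ 2
        = 1 / (2 * γ) * ‖y - x‖ ^ 2 + γ⁻¹ * (1 + K) * ‖y - x‖ ^ 2 := by rw [hCdef]; ring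
    have hnn : 0 ≤ γ⁻¹ * (1 + K) * ‖y - x‖ ^ 2 := by positivity
    have hey : env y = g (p y) + 1 / (2 * γ) * ‖p y - y‖ ^ 2 := rfl
    have hex : env x = g (p x) + 1 / (2 * γ) * ‖p x - x‖ ^ 2 := rfl
    rw [abs_le, hey, hex]
    constructor
    · -- lower bound
      have h1 : ⟪v y, x - y⟫ = -⟪v y, y - x⟫ := by
        rw [← inner_neg_right, show -(y - x) = x - y from by abel]
      rw [h1] at hdown
      have h2 : ‖x - y‖ = ‖y - x‖ := norm_sub_rev _ _
      rw [h2] at hdown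
      have h3 : ⟪v y - v x, y - x⟫ ≤ ‖v y - v x‖ * ‖y - x‖ := real_inner_le_norm _ _
      have h4 : ‖v y - v x‖ * ‖y - x‖ ≤ (γ⁻¹ * (1 + K) * ‖y - x‖) * ‖y - x‖ :=
        mul_le_mul_of_nonneg_right (hvlip y x) (norm_nonneg _)
      have h5 : -⟪v y - v x, y - x⟫ ≤ γ⁻¹ * (1 + K) * ‖y - x‖ ^ 2 := by
        have h6 : -⟪v y - v x, y - x⟫ = ⟪v x - v y, y - x⟫ := by
          rw [show v x - v y = -(v y - v x) from by abel, inner_neg_left]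
        have h7 : ⟪v x - v y, y - x⟫ ≤ ‖v x - v y‖ * ‖y - x‖ := real_inner_le_norm _ _
        have h8 : ‖v x - v y‖ = ‖v y - v x‖ := norm_sub_rev _ _
        rw [h6]
        calc ⟪v x - v y, y - x⟫ ≤ ‖v x - v y‖ * ‖y - x‖ := h7
          _ = ‖v y - v x‖ * ‖y - x‖ := by rw [h8]
          _ ≤ γ⁻¹ * (1 + K) * ‖y - x‖ * ‖y - x‖ := h4
          _ = γ⁻¹ * (1 + K) * ‖y - x‖ ^ 2 := by ring
      have hsub : ⟪v y, y - x⟫ - ⟪v x, y - x⟫ = ⟪v y - v x, y - x⟫ := (inner_sub_left _ _ _).symm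
      linarith [hdown]
    · linarith [hup]
  -- conclude HasGradientAt
  have hvx : γ⁻¹ • (x - p x) = v x := rfl
  rw [hvx, hasGradientAt_iff_hasFDerivAt, hasFDerivAt_iff_isLittleO,
    Asymptotics.isLittleO_iff]
  intro c hc
  rw [Metric.eventually_nhds_iff]
  refine ⟨c / C, by positivity, fun y hy => ?_⟩
  have hdy : ‖y - x‖ < c / C := by rwa [dist_eq_norm] at hy
  have h1 : ‖env y - env x - (InnerProductSpace.toDual ℝ E (v x)) (y - x)‖
      = |env y - env x - ⟪v x, y - x⟫| := by
    rw [InnerProductSpace.toDual_apply_apply, Real.norm_eq_abs]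
  rw [h1]
  calc |env y - env x - ⟪v x, y - x⟫| ≤ C * ‖y - x‖ ^ 2 := hquad y
    _ ≤ C * ((c / C) * ‖y - x‖) := by
        have e : ‖y - x‖ ^ 2 = ‖y - x‖ * ‖y - x‖ := pow_two _
        have h2 : ‖y - x‖ * ‖y - x‖ ≤ (c / C) * ‖y - x‖ :=
          mul_le_mul_of_nonneg_right hdy.le (norm_nonneg _)
        rw [e]
        exact mul_le_mul_of_nonneg_left h2 hC0.le
    _ = c * ‖y - x‖ := by field_simp
end MoreauAux

/-- Differentiability of the forward-backward envelope. For `f` C² with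
`L_f`-Lipschitz gradient, `g` M-weakly convex, `γ ∈ (0, 1/M)`, and prox-selection `p`,
`φ_γ(x) = f(x) - (γ/2)‖∇f x‖² + g^γ(x - γ∇f x)` is continuously differentiable with
`∇φ_γ(x) = (I - γ∇²f(x)) R_γ(x)`. -/
theorem stmt_14 {n : ℕ} (f g : EuclideanSpace ℝ (Fin n) → ℝ)
    (f' : EuclideanSpace ℝ (Fin n) → EuclideanSpace ℝ (Fin n))
    (f'' : EuclideanSpace ℝ (Fin n) →
      (EuclideanSpace ℝ (Fin n) →L[ℝ] EuclideanSpace ℝ (Fin n)))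
    (Lf M γ : ℝ) (hM : 0 < M)
    (hf : ∀ x, HasGradientAt f (f' x) x)
    (hf2 : ∀ x, HasFDerivAt f' (f'' x) x)
    (hf2c : Continuous f'')
    (hLf : ∀ x y, ‖f' x - f' y‖ ≤ Lf * ‖x - y‖)
    (hlsc : LowerSemicontinuous g)
    (hwc : ConvexOn ℝ Set.univ (fun x => g x + (M / 2) * ‖x‖ ^ 2))
    (hγ0 : 0 < γ) (hγ : γ < 1 / M)
    (p : EuclideanSpace ℝ (Fin n) → EuclideanSpace ℝ (Fin n))
    (hp : ∀ x v, g (p x) + (1 / (2 * γ)) * ‖p x - x‖ ^ 2 ≤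
      g v + (1 / (2 * γ)) * ‖v - x‖ ^ 2) :
    (∀ x, HasGradientAt
        (fun y => f y - (γ / 2) * ‖f' y‖ ^ 2 +
          (g (p (y - γ • f' y)) + (1 / (2 * γ)) * ‖p (y - γ • f' y) - (y - γ • f' y)‖ ^ 2))
        (γ⁻¹ • (x - p (x - γ • f' x)) - γ • f'' x (γ⁻¹ • (x - p (x - γ • f' x)))) x) ∧
      Continuous (fun x =>
        γ⁻¹ • (x - p (x - γ • f' x)) - γ • f'' x (γ⁻¹ • (x - p (x - γ • f' x)))) := by
  have hγne : γ ≠ 0 := ne_of_gt hγ0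
  constructor
  · intro x
    -- symmetry of the Hessian
    have hsym : ∀ a b : EuclideanSpace ℝ (Fin n), ⟪f'' x a, b⟫ = ⟪f'' x b, a⟫ := by
      intro a b
      have hDD := (InnerProductSpace.toDual ℝ (EuclideanSpace ℝ (Fin n))).comp_hasFDerivAt_iff
        (f' := f'' x) (f := f') (x := x) |>.mpr (hf2 x)
      have hF' : ∀ y, HasFDerivAt f
          ((InnerProductSpace.toDual ℝ (EuclideanSpace ℝ (Fin n)) ∘ f') y) y := fun y =>
        (hf y).hasFDerivAt
      have hs := second_derivative_symmetric hF' hDD a b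
      exact hs
    have h1 : HasFDerivAt f (InnerProductSpace.toDual ℝ (EuclideanSpace ℝ (Fin n)) (f' x)) x :=
      (hf x).hasFDerivAt
    have hsq : HasFDerivAt (fun y => ‖f' y‖ ^ 2)
        ((fderivInnerCLM ℝ (f' x, f' x)).comp ((f'' x).prod (f'' x))) x := by
      have h := (hf2 x).inner ℝ (hf2 x)
      have hfun : (fun y => ‖f' y‖ ^ 2) = fun y => ⟪f' y, f' y⟫ := by
        funext y; rw [real_inner_self_eq_norm_sq]
      rw [hfun]; exact h
    have henvF : HasFDerivAt (fun y => g (p y) + (1 / (2 * γ)) * ‖p y - y‖ ^ 2)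
        (InnerProductSpace.toDual ℝ (EuclideanSpace ℝ (Fin n))
          (γ⁻¹ • ((x - γ • f' x) - p (x - γ • f' x)))) (x - γ • f' x) :=
      (env_grad hM hγ0 hγ hwc hp (x - γ • f' x)).hasFDerivAt
    have hAd : HasFDerivAt (fun y => y - γ • f' y)
        (ContinuousLinearMap.id ℝ (EuclideanSpace ℝ (Fin n)) - γ • f'' x) x :=
      (hasFDerivAt_id x).sub ((hf2 x).const_smul γ)
    have hcomp : HasFDerivAt
        (fun y => g (p (y - γ • f' y)) + (1 / (2 * γ)) * ‖p (y - γ • f' y) - (y - γ • f' y)‖ ^ 2)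
        ((InnerProductSpace.toDual ℝ (EuclideanSpace ℝ (Fin n))
            (γ⁻¹ • ((x - γ • f' x) - p (x - γ • f' x)))).comp
          (ContinuousLinearMap.id ℝ (EuclideanSpace ℝ (Fin n)) - γ • f'' x)) x :=
      by have := henvF.comp x hAd; exact this
    have htotal := (h1.sub (hsq.const_mul (γ / 2))).add hcomp
    rw [hasGradientAt_iff_hasFDerivAt]
    have heq : InnerProductSpace.toDual ℝ (EuclideanSpace ℝ (Fin n))
        (γ⁻¹ • (x - p (x - γ • f' x)) - γ • f'' x (γ⁻¹ • (x - p (x - γ • f' x))))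
        = (InnerProductSpace.toDual ℝ (EuclideanSpace ℝ (Fin n)) (f' x) - (γ / 2) •
            ((fderivInnerCLM ℝ (f' x, f' x)).comp ((f'' x).prod (f'' x)))) +
          (InnerProductSpace.toDual ℝ (EuclideanSpace ℝ (Fin n))
            (γ⁻¹ • ((x - γ • f' x) - p (x - γ • f' x)))).comp
            (ContinuousLinearMap.id ℝ (EuclideanSpace ℝ (Fin n)) - γ • f'' x) := by
      have hRs : γ⁻¹ • ((x - γ • f' x) - p (x - γ • f' x))
          = γ⁻¹ • (x - p (x - γ • f' x)) - f' x := by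
        rw [show (x - γ • f' x) - p (x - γ • f' x)
            = (x - p (x - γ • f' x)) - γ • f' x from by abel,
          smul_sub, smul_smul, inv_mul_cancel₀ hγne, one_smul]
      ext h
      simp only [InnerProductSpace.toDual_apply_apply, ContinuousLinearMap.add_apply,
        ContinuousLinearMap.sub_apply, ContinuousLinearMap.comp_apply,
        ContinuousLinearMap.coe_smul', Pi.smul_apply, fderivInnerCLM_apply,
        ContinuousLinearMap.prod_apply, ContinuousLinearMap.id_apply, smul_eq_mul, hRs]
      rw [inner_sub_left, inner_sub_left, inner_sub_right, real_inner_smul_left,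
        real_inner_smul_right]
      have E1 : ⟪γ • f'' x (γ⁻¹ • (x - p (x - γ • f' x))), h⟫
          = ⟪f'' x (x - p (x - γ • f' x)), h⟫ := by
        rw [← (f'' x).map_smul, smul_smul, mul_inv_cancel₀ hγne, one_smul]
      have E2 : ⟪f'' x (x - p (x - γ • f' x)), h⟫ = ⟪(x - p (x - γ • f' x)), f'' x h⟫ := by
        rw [hsym _ h]; exact real_inner_comm _ _
      have E3 : ⟪γ⁻¹ • (x - p (x - γ • f' x)), f'' x h⟫
          = γ⁻¹ * ⟪(x - p (x - γ • f' x)), f'' x h⟫ := real_inner_smul_left _ _ _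
      have E4 : ⟪f' x, h - γ • f'' x h⟫ = ⟪f' x, h⟫ - γ * ⟪f' x, f'' x h⟫ := by
        rw [inner_sub_right, real_inner_smul_right]
      have E5 : ⟪f'' x h, f' x⟫ = ⟪f' x, f'' x h⟫ := real_inner_comm _ _
      rw [E1, E2, E3, E4, E5]
      field_simp
      ring
    rw [heq]
    exact htotal
  · -- continuity
    have hσ : 0 < 1 - γ * M := by
      have := (lt_div_iff₀ hM).mp hγ; linarith
    have hpc : Continuous p := by
      have hlip : LipschitzWith (Real.toNNReal ((1 - γ * M)⁻¹)) p := by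
        apply LipschitzWith.of_dist_le_mul
        intro a b
        rw [dist_eq_norm, dist_eq_norm]
        have h := p_lip hM hγ0 hγ hwc hp b a
        rwa [Real.coe_toNNReal _ (by positivity)]
      exact hlip.continuous
    have hf'c : Continuous f' := by
      rw [continuous_iff_continuousAt]; exact fun x => (hf2 x).continuousAt
    have hAc : Continuous (fun x => x - γ • f' x) := continuous_id.sub (hf'c.const_smul γ)
    have hRc : Continuous (fun x => γ⁻¹ • (x - p (x - γ • f' x))) :=
      (continuous_id.sub (hpc.comp hAc)).const_smul γ⁻¹
    exact hRc.sub ((hf2c.clm_apply hRc).const_smul γ)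
end

section
/- Let (β_k) and (δ_k) be real sequences with β_k ≥ 0, δ_k ≥ 0, δ_{k+1} ≤ δ_k, and β_{k+1}² ≤ (δ_k − δ_{k+1}) β_k for all k ∈ ℕ. Then the series Σ_{k=0}^∞ β_k converges (is finite). -/
/-!
By AM-GM, `β (k+1) ≤ √((δ k - δ (k+1)) β k) ≤ (β k + δ k - δ (k+1)) / 2`. Summing, twice the partial
sums of `β` (shifted by one) are dominated by the partial sums themselves plus the telescoping sum
`δ 0 - δ n ≤ δ 0`, so the partial sums of `β` stay bounded.
-/

open Finset

lemma summable_of_two_mul_succ_le_add {β ε : ℕ → ℝ} {C : ℝ} (hβ : ∀ k, 0 ≤ β k)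
    (hstep : ∀ k, 2 * β (k + 1) ≤ β k + ε k) (hε : ∀ n, ∑ i ∈ range n, ε i ≤ C) :
    Summable β := by
  have hsum_mono : ∀ n, ∑ i ∈ range n, β i ≤ ∑ i ∈ range (n + 1), β i := fun n => by
    rw [sum_range_succ]
    linarith [hβ n]
  have hsucc : ∀ n, ∑ i ∈ range (n + 1), β i ≤ 2 * β 0 + C := fun n => by
    have hsum : 2 * ∑ i ∈ range n, β (i + 1) ≤ ∑ i ∈ range n, β i + ∑ i ∈ range n, ε i := by
      rw [mul_sum, ← sum_add_distrib]
      exact sum_le_sum fun k _ => hstep k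
    have hm := hsum_mono n
    rw [sum_range_succ'] at hm ⊢
    linarith [hε n]
  exact summable_of_sum_range_le hβ fun n => (hsum_mono n).trans (hsucc n)

/-- If `β_k, δ_k ≥ 0`, `δ_{k+1} ≤ δ_k`, and `β_{k+1}² ≤ (δ_k - δ_{k+1})β_k`
for all `k`, then `Σ β_k < ∞`. -/
theorem stmt_17 (β δ : ℕ → ℝ) (hβ : ∀ k, 0 ≤ β k) (hδ : ∀ k, 0 ≤ δ k)
    (hmono : ∀ k, δ (k + 1) ≤ δ k)
    (h : ∀ k, (β (k + 1)) ^ 2 ≤ (δ k - δ (k + 1)) * β k) :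
    Summable β := by
  have hstep : ∀ k, 2 * β (k + 1) ≤ β k + (δ k - δ (k + 1)) := fun k => by
    rw [add_comm (β k)]
    exact two_mul_le_add_of_sq_le_mul (sub_nonneg.2 (hmono k)) (hβ k) (h k)
  refine summable_of_two_mul_succ_le_add hβ hstep (C := δ 0) fun n => ?_
  rw [sum_range_sub']
  linarith [hδ n]
end

section
/- Under the MINFBE iteration with f C¹ with L_f-Lipschitz gradient, g M-weakly convex, φ = f + g bounded below, β ∈ (0,1), step sizes γ_k bounded below by γ_∞ > 0 and above, and suppose there exist τ̄, c > 0 with τ_k ≤ τ̄ and ‖d^k‖ ≤ c‖R_{γ_k}(x^k)‖ where w^k = x^k + τ_k d^k and x^{k+1} = T_{γ_k}(w^k). Then ‖x^{k+1} − x^k‖ ≤ γ_k‖R_{γ_k}(w^k)‖ + τ̄ c ‖R_{γ_k}(x^k)‖ for all k, and consequently Σ_k ‖x^{k+1} − x^k‖² < ∞. -/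
open scoped RealInnerProductSpace

/-- Displacement bound and square-summability for MINFBE. With
`w^k = x^k + τ_k d^k`, `x^{k+1} = T_{γ_k}(w^k)`, `τ_k ≤ τ̄`, `‖d^k‖ ≤ c‖R_{γ_k}(x^k)‖`,
step sizes `γ_∞ ≤ γ_k ≤ γ₀ < 1/M`, `β ∈ (0,1)`, `φ = f + g` bounded below and the
MINFBE sufficient decrease, one has
`‖x^{k+1} - x^k‖ ≤ γ_k‖R_{γ_k}(w^k)‖ + τ̄ c‖R_{γ_k}(x^k)‖` for all `k`, and
`Σ_k ‖x^{k+1} - x^k‖² < ∞`. -/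
theorem stmt_19 {n : ℕ} (f g : EuclideanSpace ℝ (Fin n) → ℝ)
    (f' : EuclideanSpace ℝ (Fin n) → EuclideanSpace ℝ (Fin n))
    (Lf M β γinf γ₀ τbar c : ℝ) (hM : 0 < M)
    (hf : ∀ x, HasGradientAt f (f' x) x)
    (hLf : ∀ x y, ‖f' x - f' y‖ ≤ Lf * ‖x - y‖)
    (hlsc : LowerSemicontinuous g)
    (hwc : ConvexOn ℝ Set.univ (fun x => g x + (M / 2) * ‖x‖ ^ 2))
    (hβ0 : 0 < β) (hβ1 : β < 1) (hγinf : 0 < γinf) (hγ₀ : γ₀ < 1 / M)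
    (hτbar : 0 < τbar) (hcpos : 0 < c)
    (γ : ℕ → ℝ) (hγlo : ∀ k, γinf ≤ γ k) (hγhi : ∀ k, γ k ≤ γ₀)
    (T : ℝ → EuclideanSpace ℝ (Fin n) → EuclideanSpace ℝ (Fin n))
    (hT : ∀ s, 0 < s → ∀ x v, g (T s x) + (1 / (2 * s)) * ‖T s x - (x - s • f' x)‖ ^ 2 ≤
      g v + (1 / (2 * s)) * ‖v - (x - s • f' x)‖ ^ 2)
    (hbdd : BddBelow (Set.range (fun y => f y + g y)))
    (x w d : ℕ → EuclideanSpace ℝ (Fin n)) (τ : ℕ → ℝ)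
    (hτ0 : ∀ k, 0 ≤ τ k) (hτ : ∀ k, τ k ≤ τbar)
    (hd : ∀ k, ‖d k‖ ≤ c * ‖(γ k)⁻¹ • (x k - T (γ k) (x k))‖)
    (hw : ∀ k, w k = x k + τ k • d k)
    (hx : ∀ k, x (k + 1) = T (γ k) (w k))
    (hdec : ∀ k, f (x (k + 1)) + g (x (k + 1)) ≤
      (f (x k) + g (x k)) - (β * γ k / 2) * ‖(γ k)⁻¹ • (w k - T (γ k) (w k))‖ ^ 2 -
        ((γ k - M * (γ k) ^ 2) / 2) * ‖(γ k)⁻¹ • (x k - T (γ k) (x k))‖ ^ 2) :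
    (∀ k, ‖x (k + 1) - x k‖ ≤
        γ k * ‖(γ k)⁻¹ • (w k - T (γ k) (w k))‖ +
          τbar * c * ‖(γ k)⁻¹ • (x k - T (γ k) (x k))‖) ∧
      Summable (fun k => ‖x (k + 1) - x k‖ ^ 2) := by
  have hγpos : ∀ k, 0 < γ k := fun k => lt_of_lt_of_le hγinf (hγlo k)
  have hγ₀pos : 0 < γ₀ := lt_of_lt_of_le (hγpos 0) (hγhi 0)
  set a : ℕ → ℝ := fun k => ‖(γ k)⁻¹ • (w k - T (γ k) (w k))‖ with ha
  set b : ℕ → ℝ := fun k => ‖(γ k)⁻¹ • (x k - T (γ k) (x k))‖ with hb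
  have ha0 : ∀ k, 0 ≤ a k := fun k => norm_nonneg _
  have hb0 : ∀ k, 0 ≤ b k := fun k => norm_nonneg _
  have hMγ₀ : M * γ₀ < 1 := by
    rw [div_eq_inv_mul, mul_one] at hγ₀
    calc M * γ₀ < M * M⁻¹ := by
          exact mul_lt_mul_of_pos_left hγ₀ hM
      _ = 1 := mul_inv_cancel₀ hM.ne'
  -- Part 1
  have part1 : ∀ k, ‖x (k + 1) - x k‖ ≤ γ k * a k + τbar * c * b k := by
    intro k
    have h1 : x (k + 1) - x k = (T (γ k) (w k) - w k) + τ k • d k := by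
      rw [hx k, hw k]; abel
    have hnorm : ‖T (γ k) (w k) - w k‖ = γ k * a k := by
      rw [ha]
      simp only [norm_smul, norm_inv, Real.norm_eq_abs, abs_of_pos (hγpos k)]
      rw [← norm_neg (T (γ k) (w k) - w k), neg_sub]
      field_simp [(hγpos k).ne']
    have hτd : ‖τ k • d k‖ ≤ τbar * c * b k := by
      rw [norm_smul, Real.norm_eq_abs, abs_of_nonneg (hτ0 k)]
      calc τ k * ‖d k‖ ≤ τbar * (c * b k) := by
            apply mul_le_mul (hτ k) (hd k) (norm_nonneg _) hτbar.le
        _ = τbar * c * b k := by ring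
    calc ‖x (k + 1) - x k‖ ≤ ‖T (γ k) (w k) - w k‖ + ‖τ k • d k‖ := by
          rw [h1]; exact norm_add_le _ _
      _ ≤ γ k * a k + τbar * c * b k := by rw [hnorm]; linarith
  refine ⟨part1, ?_⟩
  -- Part 2
  set s : ℕ → ℝ := fun k =>
    (β * γ k / 2) * a k ^ 2 + ((γ k - M * γ k ^ 2) / 2) * b k ^ 2 with hs
  have hcoef2 : ∀ k, γinf * (1 - M * γ₀) ≤ γ k - M * γ k ^ 2 := by
    intro k
    have h1 := hγlo k
    have h2 := hγhi k
    nlinarith [hγpos k, mul_pos hM (hγpos k)]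
  have hcoef2pos : 0 < γinf * (1 - M * γ₀) := by nlinarith
  have hs0 : ∀ k, 0 ≤ s k := by
    intro k
    have := hcoef2 k
    have h1 : 0 ≤ (β * γ k / 2) * a k ^ 2 := by
      apply mul_nonneg _ (sq_nonneg _)
      nlinarith [hγpos k]
    have h2 : 0 ≤ ((γ k - M * γ k ^ 2) / 2) * b k ^ 2 := by
      apply mul_nonneg _ (sq_nonneg _)
      linarith
    simp only [hs]
    linarith
  obtain ⟨m, hm⟩ := hbdd
  have hmle : ∀ y, m ≤ f y + g y := by
    intro y
    exact hm ⟨y, rfl⟩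
  have hsum_s : Summable s := by
    apply summable_of_sum_range_le hs0 (c := f (x 0) + g (x 0) - m)
    intro N
    have key : ∀ N, ∑ i ∈ Finset.range N, s i ≤ (f (x 0) + g (x 0)) - (f (x N) + g (x N)) := by
      intro N
      induction N with
      | zero => simp
      | succ N ih =>
        rw [Finset.sum_range_succ]
        have := hdec N
        simp only [hs]
        linarith
    have := key N
    have := hmle (x N)
    linarith
  -- comparison
  have hK : Summable (fun k => (4 * γ₀ ^ 2 / (β * γinf) + 4 * (τbar * c) ^ 2 / (γinf * (1 - M * γ₀))) * s k) :=
    hsum_s.mul_left _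
  apply Summable.of_nonneg_of_le (fun k => sq_nonneg _) _ hK
  intro k
  have hp1 := part1 k
  have hA : (β * γinf / 2) * a k ^ 2 ≤ s k := by
    have h1 : 0 ≤ ((γ k - M * γ k ^ 2) / 2) * b k ^ 2 :=
      mul_nonneg (by linarith [hcoef2 k, hcoef2pos]) (sq_nonneg _)
    have h2 : (β * γinf / 2) * a k ^ 2 ≤ (β * γ k / 2) * a k ^ 2 := by
      apply mul_le_mul_of_nonneg_right _ (sq_nonneg _)
      have := hγlo k
      nlinarith
    simp only [hs]; linarith
  have hB : (γinf * (1 - M * γ₀) / 2) * b k ^ 2 ≤ s k := by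
    have h1 : 0 ≤ (β * γ k / 2) * a k ^ 2 :=
      mul_nonneg (by nlinarith [hγpos k]) (sq_nonneg _)
    have h2 : (γinf * (1 - M * γ₀) / 2) * b k ^ 2 ≤ ((γ k - M * γ k ^ 2) / 2) * b k ^ 2 := by
      apply mul_le_mul_of_nonneg_right _ (sq_nonneg _)
      linarith [hcoef2 k]
    simp only [hs]; linarith
  have hsq : ‖x (k + 1) - x k‖ ^ 2 ≤ 2 * γ₀ ^ 2 * a k ^ 2 + 2 * (τbar * c) ^ 2 * b k ^ 2 := by
    have h0 : 0 ≤ ‖x (k + 1) - x k‖ := norm_nonneg _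
    have hγa : γ k * a k ≤ γ₀ * a k := mul_le_mul_of_nonneg_right (hγhi k) (ha0 k)
    nlinarith [sq_nonneg (γ₀ * a k - τbar * c * b k), ha0 k, hb0 k, hγpos k,
      mul_nonneg (hγpos k).le (ha0 k), mul_nonneg (mul_nonneg hτbar.le hcpos.le) (hb0 k)]
  have hβγinf : 0 < β * γinf := mul_pos hβ0 hγinf
  have e1 : 2 * γ₀ ^ 2 * a k ^ 2 ≤ (4 * γ₀ ^ 2 / (β * γinf)) * s k := by
    have hnn : (0:ℝ) ≤ 4 * γ₀ ^ 2 / (β * γinf) := div_nonneg (by positivity) hβγinf.le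
    have h := mul_le_mul_of_nonneg_left hA hnn
    have heq : 4 * γ₀ ^ 2 / (β * γinf) * (β * γinf / 2 * a k ^ 2) = 2 * γ₀ ^ 2 * a k ^ 2 := by
      field_simp
      ring
    rw [heq] at h
    linarith
  have e2 : 2 * (τbar * c) ^ 2 * b k ^ 2 ≤ (4 * (τbar * c) ^ 2 / (γinf * (1 - M * γ₀))) * s k := by
    have hnn : (0:ℝ) ≤ 4 * (τbar * c) ^ 2 / (γinf * (1 - M * γ₀)) :=
      div_nonneg (by positivity) hcoef2pos.le
    have h := mul_le_mul_of_nonneg_left hB hnn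
    have heq : 4 * (τbar * c) ^ 2 / (γinf * (1 - M * γ₀)) * (γinf * (1 - M * γ₀) / 2 * b k ^ 2) =
        2 * (τbar * c) ^ 2 * b k ^ 2 := by
      field_simp [(sub_pos.mpr hMγ₀).ne', hγinf.ne']
      ring
    rw [heq] at h
    linarith
  calc ‖x (k + 1) - x k‖ ^ 2 ≤ 2 * γ₀ ^ 2 * a k ^ 2 + 2 * (τbar * c) ^ 2 * b k ^ 2 := hsq
    _ ≤ (4 * γ₀ ^ 2 / (β * γinf) + 4 * (τbar * c) ^ 2 / (γinf * (1 - M * γ₀))) * s k := by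
        rw [add_mul]; linarith
end
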